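/- arXiv:0906.5089 — 3 statements merged into one kernel-verified Lean document; each statement's English description precedes it below -/
import Mathlib

section
/- For every p ∈ (0, 1/2), the parametric triplet (respectively quartet) distance d^(p) on the set of all rooted (respectively unrooted) phylogenies over a fixed taxon set is a near-metric: there exists a constant c, independent of the number of trees in the domain, such that d^(p)(x,z) ≤ c·(d^(p)(x,x1) + d^(p)(x1,x2) + … + d^(p)(x_{m−1},z)) for all m > 1 and all trees x, x1, …, x_{m−1}, z. -/
open Finset

attribute [local instance] Classical.propDecidable

/-- A rooted phylogenetic tree over the taxon set `Fin n`, encoded by its hierarchy of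
clusters: for each node of the tree, the set of leaves descending from that node.
The conditions say that the whole leaf set and all singletons are clusters, the empty
set is not a cluster, and that the family is laminar.  Such families correspond exactly
to rooted phylogenies in which every internal node has at least two children. -/
structure RTree (n : ℕ) where
  clusters : Finset (Finset (Fin n))
  univ_mem : Finset.univ ∈ clusters
  singleton_mem : ∀ x : Fin n, {x} ∈ clusters
  empty_not_mem : ∅ ∉ clusters
  laminar : ∀ C ∈ clusters, ∀ D ∈ clusters, C ⊆ D ∨ D ⊆ C ∨ C ∩ D = ∅

/-- All triplets (3-element subsets) of `Fin n`. -/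
def triplets (n : ℕ) : Finset (Finset (Fin n)) :=
  Finset.powersetCard 3 Finset.univ

/-- The cluster family of the restriction `T|X`, for a rooted tree with cluster
family `F`: the nonempty intersections of clusters with `X`. -/
noncomputable def famRestrict {n : ℕ} (F : Finset (Finset (Fin n))) (X : Finset (Fin n)) :
    Finset (Finset (Fin n)) :=
  (F.image (· ∩ X)).filter (· ≠ ∅)

/-- A triplet `X` is resolved in a rooted tree with cluster family `F` iff the
restriction `T|X` is fully resolved, equivalently iff some cluster contains exactly
two of the three elements of `X`. -/
def famResolved {n : ℕ} (F : Finset (Finset (Fin n))) (X : Finset (Fin n)) : Prop :=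
  ∃ C ∈ F, (C ∩ X).card = 2

/-- Triplets resolved, identically, in both trees. -/
noncomputable def famSetS {n : ℕ} (F G : Finset (Finset (Fin n))) :
    Finset (Finset (Fin n)) :=
  (triplets n).filter fun X =>
    famResolved F X ∧ famResolved G X ∧ famRestrict F X = famRestrict G X

/-- Triplets resolved, differently, in both trees. -/
noncomputable def famSetD {n : ℕ} (F G : Finset (Finset (Fin n))) :
    Finset (Finset (Fin n)) :=
  (triplets n).filter fun X =>
    famResolved F X ∧ famResolved G X ∧ famRestrict F X ≠ famRestrict G X

/-- Triplets resolved in the first tree but not in the second. -/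
noncomputable def famSetR1 {n : ℕ} (F G : Finset (Finset (Fin n))) :
    Finset (Finset (Fin n)) :=
  (triplets n).filter fun X => famResolved F X ∧ ¬ famResolved G X

/-- Triplets resolved in the second tree but not in the first. -/
noncomputable def famSetR2 {n : ℕ} (F G : Finset (Finset (Fin n))) :
    Finset (Finset (Fin n)) :=
  (triplets n).filter fun X => famResolved G X ∧ ¬ famResolved F X

/-- Triplets unresolved in both trees. -/
noncomputable def famSetU {n : ℕ} (F G : Finset (Finset (Fin n))) :
    Finset (Finset (Fin n)) :=
  (triplets n).filter fun X => ¬ famResolved F X ∧ ¬ famResolved G X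

/-- The parametric triplet distance, at the level of cluster families. -/
noncomputable def famPdist {n : ℕ} (p : ℝ) (F G : Finset (Finset (Fin n))) : ℝ :=
  ((famSetD F G).card : ℝ) +
    p * (((famSetR1 F G).card : ℝ) + ((famSetR2 F G).card : ℝ))

namespace RTree

variable {n : ℕ}

/-- The cluster family of the restriction `T|X`. -/
noncomputable def restrict (T : RTree n) (X : Finset (Fin n)) : Finset (Finset (Fin n)) :=
  famRestrict T.clusters X

/-- The triplet `X` is resolved in `T`, i.e. `T|X` is fully resolved. -/
def Resolved (T : RTree n) (X : Finset (Fin n)) : Prop :=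
  famResolved T.clusters X

/-- A rooted phylogeny is fully resolved (all internal nodes have exactly two
children) iff every triplet is resolved in it. -/
def FullyResolved (T : RTree n) : Prop :=
  ∀ X ∈ triplets n, T.Resolved X

noncomputable def setS (T₁ T₂ : RTree n) : Finset (Finset (Fin n)) :=
  famSetS T₁.clusters T₂.clusters

noncomputable def setD (T₁ T₂ : RTree n) : Finset (Finset (Fin n)) :=
  famSetD T₁.clusters T₂.clusters

noncomputable def setR1 (T₁ T₂ : RTree n) : Finset (Finset (Fin n)) :=
  famSetR1 T₁.clusters T₂.clusters

noncomputable def setR2 (T₁ T₂ : RTree n) : Finset (Finset (Fin n)) :=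
  famSetR2 T₁.clusters T₂.clusters

noncomputable def setU (T₁ T₂ : RTree n) : Finset (Finset (Fin n)) :=
  famSetU T₁.clusters T₂.clusters

/-- The parametric triplet distance `d⁽ᵖ⁾(T₁,T₂)`. -/
noncomputable def pdist (p : ℝ) (T₁ T₂ : RTree n) : ℝ :=
  famPdist p T₁.clusters T₂.clusters

theorem clusters_injective : Function.Injective (clusters (n := n)) := by
  rintro ⟨s₁, _, _, _, _⟩ ⟨s₂, _, _, _, _⟩ h
  simp only [mk.injEq] at h ⊢
  exact h

noncomputable instance : Fintype (RTree n) :=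
  Fintype.ofInjective clusters clusters_injective

end RTree

/-- An unrooted phylogenetic tree over the taxon set `Fin n`, encoded by its split
system: the collection of all sets of leaves lying on one side of some edge of the
tree.  By the splits-equivalence (Buneman) theorem, the families satisfying these
conditions (all trivial splits present, closure under complementation, pairwise
compatibility) correspond exactly to unrooted phylogenies in which every internal
node has degree at least three. -/
structure UTree (n : ℕ) where
  splits : Finset (Finset (Fin n))
  empty_not_mem : ∅ ∉ splits
  trivial_mem : ∀ x : Fin n, ({x} : Finset (Fin n)) = Finset.univ ∨ {x} ∈ splits
  compl_mem : ∀ A ∈ splits, Finset.univ \ A ∈ splits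
  compat : ∀ A ∈ splits, ∀ B ∈ splits, A ⊆ B ∨ B ⊆ A ∨ A ∩ B = ∅ ∨ A ∪ B = Finset.univ

/-- All quartets (4-element subsets) of `Fin n`. -/
def quartets (n : ℕ) : Finset (Finset (Fin n)) :=
  Finset.powersetCard 4 Finset.univ

/-- The split system of the restriction `T|X`, for an unrooted tree with split
system `F`: the proper nonempty intersections of split sides with `X`. -/
noncomputable def famRestrictU {n : ℕ} (F : Finset (Finset (Fin n))) (X : Finset (Fin n)) :
    Finset (Finset (Fin n)) :=
  (F.image (· ∩ X)).filter fun A => A ≠ ∅ ∧ A ≠ X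

/-- A quartet `X` is resolved in an unrooted tree with split system `F` iff the
restriction `T|X` is fully resolved, equivalently iff some split side contains
exactly two of the four elements of `X`. -/
def famResolvedU {n : ℕ} (F : Finset (Finset (Fin n))) (X : Finset (Fin n)) : Prop :=
  ∃ A ∈ F, (A ∩ X).card = 2

/-- Quartets resolved, identically, in both trees. -/
noncomputable def famSetSU {n : ℕ} (F G : Finset (Finset (Fin n))) :
    Finset (Finset (Fin n)) :=
  (quartets n).filter fun X =>
    famResolvedU F X ∧ famResolvedU G X ∧ famRestrictU F X = famRestrictU G X

/-- Quartets resolved, differently, in both trees. -/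
noncomputable def famSetDU {n : ℕ} (F G : Finset (Finset (Fin n))) :
    Finset (Finset (Fin n)) :=
  (quartets n).filter fun X =>
    famResolvedU F X ∧ famResolvedU G X ∧ famRestrictU F X ≠ famRestrictU G X

/-- Quartets resolved in the first tree but not in the second. -/
noncomputable def famSetR1U {n : ℕ} (F G : Finset (Finset (Fin n))) :
    Finset (Finset (Fin n)) :=
  (quartets n).filter fun X => famResolvedU F X ∧ ¬ famResolvedU G X

/-- Quartets resolved in the second tree but not in the first. -/
noncomputable def famSetR2U {n : ℕ} (F G : Finset (Finset (Fin n))) :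
    Finset (Finset (Fin n)) :=
  (quartets n).filter fun X => famResolvedU G X ∧ ¬ famResolvedU F X

/-- Quartets unresolved in both trees. -/
noncomputable def famSetUU {n : ℕ} (F G : Finset (Finset (Fin n))) :
    Finset (Finset (Fin n)) :=
  (quartets n).filter fun X => ¬ famResolvedU F X ∧ ¬ famResolvedU G X

/-- The parametric quartet distance, at the level of split systems. -/
noncomputable def famPdistU {n : ℕ} (p : ℝ) (F G : Finset (Finset (Fin n))) : ℝ :=
  ((famSetDU F G).card : ℝ) +
    p * (((famSetR1U F G).card : ℝ) + ((famSetR2U F G).card : ℝ))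

namespace UTree

variable {n : ℕ}

/-- The split system of the restriction `T|X`. -/
noncomputable def restrict (T : UTree n) (X : Finset (Fin n)) : Finset (Finset (Fin n)) :=
  famRestrictU T.splits X

/-- The quartet `X` is resolved in `T`, i.e. `T|X` is fully resolved. -/
def Resolved (T : UTree n) (X : Finset (Fin n)) : Prop :=
  famResolvedU T.splits X

/-- An unrooted phylogeny is fully resolved (all internal nodes have degree exactly
three) iff every quartet is resolved in it. -/
def FullyResolved (T : UTree n) : Prop :=
  ∀ X ∈ quartets n, T.Resolved X

noncomputable def setS (T₁ T₂ : UTree n) : Finset (Finset (Fin n)) :=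
  famSetSU T₁.splits T₂.splits

noncomputable def setD (T₁ T₂ : UTree n) : Finset (Finset (Fin n)) :=
  famSetDU T₁.splits T₂.splits

noncomputable def setR1 (T₁ T₂ : UTree n) : Finset (Finset (Fin n)) :=
  famSetR1U T₁.splits T₂.splits

noncomputable def setR2 (T₁ T₂ : UTree n) : Finset (Finset (Fin n)) :=
  famSetR2U T₁.splits T₂.splits

noncomputable def setU (T₁ T₂ : UTree n) : Finset (Finset (Fin n)) :=
  famSetUU T₁.splits T₂.splits

/-- The parametric quartet distance `d⁽ᵖ⁾(T₁,T₂)`. -/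
noncomputable def pdist (p : ℝ) (T₁ T₂ : UTree n) : ℝ :=
  famPdistU p T₁.splits T₂.splits

theorem splits_injective : Function.Injective (splits (n := n)) := by
  rintro ⟨s₁, _, _, _, _⟩ ⟨s₂, _, _, _, _⟩ h
  simp only [mk.injEq] at h ⊢
  exact h

noncomputable instance : Fintype (UTree n) :=
  Fintype.ofInjective splits splits_injective

end UTree

/-!
Summing over triplets (quartets) `X`, the distance `d⁽ᵖ⁾(T₁, T₂)` is the sum of local
contributions that depend only on the restrictions `T₁|X` and `T₂|X`: `0` if they agree,
`1` if both are resolved, `p` otherwise.  The unresolved restriction of a triplet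
(quartet) is unique (the star tree), so distinct restrictions have local distance in
`[p, 1]`.  Any distance vanishing on the diagonal and with values in `[p, 1]` off it
satisfies the relaxed polygonal inequality with constant `1 / p`: if the endpoints of a
chain differ, some step of the chain changes the restriction and already costs at least `p`.  Summing over `X` preserves the inequality.
-/

def RelaxedPolygonal {α : Type*} (c : ℝ) (d : α → α → ℝ) : Prop :=
  ∀ (m : ℕ) (x : Fin (m + 1) → α),
    d (x 0) (x (Fin.last m)) ≤ c * ∑ i : Fin m, d (x i.castSucc) (x i.succ)

namespace RelaxedPolygonal

variable {α : Type*} {c : ℝ}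

lemma exists_succ_ne_of_ne {m : ℕ} {x : Fin (m + 1) → α} (h : x 0 ≠ x (Fin.last m)) :
    ∃ i : Fin m, x i.castSucc ≠ x i.succ := by
  by_contra! hconst
  exact h (Fin.induction (motive := fun j => x 0 = x j) rfl
    (fun i hi => hi.trans (hconst i)) (Fin.last m))

lemma of_bounded_of_separated {d : α → α → ℝ} {δ M : ℝ} (hδ : 0 < δ)
    (hself : ∀ a, d a a = 0) (hle : ∀ a b, d a b ≤ M) (hsep : ∀ a b, a ≠ b → δ ≤ d a b) :
    RelaxedPolygonal (M / δ) d := by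
  have hnonneg : ∀ a b, 0 ≤ d a b := fun a b => by
    rcases eq_or_ne a b with rfl | hab
    · exact (hself a).ge
    · exact hδ.le.trans (hsep a b hab)
  intro m x
  have hM : 0 ≤ M := hself (x 0) ▸ hle _ _
  have hsum : 0 ≤ ∑ i : Fin m, d (x i.castSucc) (x i.succ) :=
    Finset.sum_nonneg fun i _ => hnonneg _ _
  rcases eq_or_ne (x 0) (x (Fin.last m)) with hend | hend
  · rw [← hend, hself]
    exact mul_nonneg (div_nonneg hM hδ.le) hsum
  obtain ⟨i, hi⟩ := exists_succ_ne_of_ne hend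
  calc d (x 0) (x (Fin.last m)) ≤ M / δ * δ := by rw [div_mul_cancel₀ _ hδ.ne']; exact hle _ _
    _ ≤ M / δ * d (x i.castSucc) (x i.succ) := by gcongr; exact hsep _ _ hi
    _ ≤ M / δ * ∑ i : Fin m, d (x i.castSucc) (x i.succ) := by
      gcongr
      exact Finset.single_le_sum (f := fun j => d (x j.castSucc) (x j.succ))
        (fun j _ => hnonneg _ _) (Finset.mem_univ i)

lemma comp {β : Type*} {d : α → α → ℝ} (h : RelaxedPolygonal c d) (f : β → α) :
    RelaxedPolygonal c fun a b => d (f a) (f b) :=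
  fun m x => h m (f ∘ x)

lemma sum {ι : Type*} (s : Finset ι) {d : ι → α → α → ℝ}
    (h : ∀ X ∈ s, RelaxedPolygonal c (d X)) :
    RelaxedPolygonal c fun a b => ∑ X ∈ s, d X a b := by
  intro m x
  rw [Finset.sum_comm, Finset.mul_sum]
  exact Finset.sum_le_sum fun X hX => h X hX m x

end RelaxedPolygonal

section LocalDistance

variable {α : Type*}

/-- A restricted tree `T|X` (as a family of subsets of `X`) is resolved iff it has a
two-element cluster (split side). -/
def HasCherry (s : Finset (Finset α)) : Prop :=
  ∃ A ∈ s, A.card = 2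

noncomputable def localPdist (p : ℝ) (a b : Finset (Finset α)) : ℝ :=
  if a = b then 0 else if HasCherry a ∧ HasCherry b then 1 else p

lemma relaxedPolygonal_localPdist {p : ℝ} (hp0 : 0 < p) (hp1 : p ≤ 1) :
    RelaxedPolygonal (1 / p) (localPdist (α := α) p) := by
  refine .of_bounded_of_separated hp0 (fun a => if_pos rfl) (fun a b => ?_) fun a b hab => ?_
  · unfold localPdist; split_ifs <;> linarith
  · rw [localPdist, if_neg hab]; split_ifs <;> linarith

lemma sum_localPdist_eq {ι : Type*} (p : ℝ) (s : Finset ι) (R₁ R₂ : ι → Prop)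
    (f g : ι → Finset (Finset α)) (hf : ∀ X ∈ s, R₁ X ↔ HasCherry (f X))
    (hg : ∀ X ∈ s, R₂ X ↔ HasCherry (g X))
    (hstar : ∀ X ∈ s, ¬ R₁ X → ¬ R₂ X → f X = g X) :
    ∑ X ∈ s, localPdist p (f X) (g X) =
      ((s.filter fun X => R₁ X ∧ R₂ X ∧ f X ≠ g X).card : ℝ) +
        p * (((s.filter fun X => R₁ X ∧ ¬ R₂ X).card : ℝ) +
          ((s.filter fun X => R₂ X ∧ ¬ R₁ X).card : ℝ)) := by
  simp only [Finset.card_filter, Nat.cast_sum, Nat.cast_ite, Nat.cast_one, Nat.cast_zero,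
    ← Finset.sum_add_distrib, Finset.mul_sum]
  refine Finset.sum_congr rfl fun X hX => ?_
  have hstar_X : ¬ HasCherry (f X) → ¬ HasCherry (g X) → f X = g X := fun h₁ h₂ =>
    hstar X hX ((hf X hX).not.2 h₁) ((hg X hX).not.2 h₂)
  rw [hf X hX, hg X hX]
  by_cases h₁ : HasCherry (f X) <;> by_cases h₂ : HasCherry (g X)
  · by_cases hfg : f X = g X <;> simp [localPdist, *]
  · have hfg : f X ≠ g X := fun e => h₂ (e ▸ h₁)
    simp [localPdist, *]
  · have hfg : f X ≠ g X := fun e => h₁ (e ▸ h₂)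
    simp [localPdist, *]
  · simp [localPdist, *]

end LocalDistance

namespace RTree

variable {n : ℕ}

lemma resolved_iff_hasCherry (T : RTree n) (X : Finset (Fin n)) :
    T.Resolved X ↔ HasCherry (T.restrict X) := by
  simp only [Resolved, famResolved, HasCherry, restrict, famRestrict, mem_filter, mem_image]
  constructor
  · rintro ⟨C, hC, hcard⟩
    exact ⟨C ∩ X, ⟨⟨C, hC, rfl⟩, fun h => by simp [h] at hcard⟩, hcard⟩
  · rintro ⟨_, ⟨⟨C, hC, rfl⟩, -⟩, hcard⟩
    exact ⟨C, hC, hcard⟩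

/-- An unresolved triplet restricts to the star tree. -/
lemma restrict_eq_filter_odd (T : RTree n) {X : Finset (Fin n)} (hX : X.card = 3)
    (h : ¬ T.Resolved X) : T.restrict X = X.powerset.filter fun A => Odd A.card := by
  ext A
  simp only [restrict, famRestrict, mem_filter, mem_image, mem_powerset, Nat.odd_iff]
  constructor
  · rintro ⟨⟨C, hC, rfl⟩, hne⟩
    have hle := card_le_card (inter_subset_right : C ∩ X ⊆ X)
    have h0 : (C ∩ X).card ≠ 0 := card_ne_zero.2 (nonempty_iff_ne_empty.2 hne)
    have h2 : (C ∩ X).card ≠ 2 := fun h2 => h ⟨C, hC, h2⟩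
    exact ⟨inter_subset_right, by omega⟩
  · rintro ⟨hAX, hodd⟩
    have hle := card_le_card hAX
    obtain h1 | h3 : A.card = 1 ∨ A.card = 3 := by omega
    · obtain ⟨a, rfl⟩ := card_eq_one.1 h1
      exact ⟨⟨{a}, T.singleton_mem a, inter_eq_left.2 hAX⟩, singleton_ne_empty a⟩
    · obtain rfl := eq_of_subset_of_card_le hAX (by omega)
      exact ⟨⟨univ, T.univ_mem, univ_inter A⟩, by rintro rfl; simp at h3⟩

lemma pdist_eq_sum (p : ℝ) (T₁ T₂ : RTree n) :
    pdist p T₁ T₂ = ∑ X ∈ triplets n, localPdist p (T₁.restrict X) (T₂.restrict X) := by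
  have hcard : ∀ X ∈ triplets n, X.card = 3 := fun X hX => (mem_powersetCard.1 hX).2
  rw [sum_localPdist_eq p _ T₁.Resolved T₂.Resolved _ _ (fun X _ => T₁.resolved_iff_hasCherry X)
    (fun X _ => T₂.resolved_iff_hasCherry X) fun X hX h₁ h₂ => by
      rw [T₁.restrict_eq_filter_odd (hcard X hX) h₁, T₂.restrict_eq_filter_odd (hcard X hX) h₂]]
  unfold pdist famPdist famSetD famSetR1 famSetR2
  congr!

lemma relaxedPolygonal_pdist {p : ℝ} (hp0 : 0 < p) (hp1 : p ≤ 1) :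
    RelaxedPolygonal (1 / p) (pdist p : RTree n → RTree n → ℝ) := by
  rw [funext₂ (pdist_eq_sum p)]
  exact .sum _ fun X _ => (relaxedPolygonal_localPdist hp0 hp1).comp (restrict · X)

end RTree

namespace UTree

variable {n : ℕ}

lemma resolved_iff_hasCherry (T : UTree n) {X : Finset (Fin n)} (hX : X.card ≠ 2) :
    T.Resolved X ↔ HasCherry (T.restrict X) := by
  simp only [Resolved, famResolvedU, HasCherry, restrict, famRestrictU, mem_filter, mem_image]
  constructor
  · rintro ⟨C, hC, hcard⟩
    exact ⟨C ∩ X, ⟨⟨C, hC, rfl⟩, fun h => by simp [h] at hcard, fun h => hX (h ▸ hcard)⟩, hcard⟩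
  · rintro ⟨_, ⟨⟨C, hC, rfl⟩, -⟩, hcard⟩
    exact ⟨C, hC, hcard⟩

/-- An unresolved quartet restricts to the star tree. -/
lemma restrict_eq_filter_odd (T : UTree n) {X : Finset (Fin n)} (hX : X.card = 4)
    (h : ¬ T.Resolved X) : T.restrict X = X.powerset.filter fun A => Odd A.card := by
  ext A
  simp only [restrict, famRestrictU, mem_filter, mem_image, mem_powerset, Nat.odd_iff]
  constructor
  · rintro ⟨⟨C, hC, rfl⟩, hne, hneX⟩
    have hle := card_le_card (inter_subset_right : C ∩ X ⊆ X)
    have h0 : (C ∩ X).card ≠ 0 := card_ne_zero.2 (nonempty_iff_ne_empty.2 hne)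
    have h2 : (C ∩ X).card ≠ 2 := fun h2 => h ⟨C, hC, h2⟩
    have h4 : (C ∩ X).card ≠ 4 := fun h4 => hneX (eq_of_subset_of_card_le inter_subset_right (by omega))
    exact ⟨inter_subset_right, by omega⟩
  · rintro ⟨hAX, hodd⟩
    have hle := card_le_card hAX
    have hsplit : ∀ a, ({a} : Finset (Fin n)) ∈ T.splits := fun a =>
      (T.trivial_mem a).resolve_left fun hu => by
        have hn := hX ▸ card_le_univ X
        have h1 := congrArg card hu
        rw [card_singleton, card_univ] at h1
        omega
    have hA0 : A ≠ ∅ := by rintro rfl; simp at hodd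
    have hAX' : A ≠ X := by rintro rfl; omega
    obtain h1 | h3 : A.card = 1 ∨ A.card = 3 := by omega
    · obtain ⟨a, rfl⟩ := card_eq_one.1 h1
      exact ⟨⟨{a}, hsplit a, inter_eq_left.2 hAX⟩, hA0, hAX'⟩
    · obtain ⟨a, ha⟩ := card_eq_one.1 (show (X \ A).card = 1 by rw [card_sdiff_of_subset hAX]; omega)
      refine ⟨⟨univ \ {a}, T.compl_mem _ (hsplit a), ?_⟩, hA0, hAX'⟩
      rw [← Finset.sdiff_sdiff_eq_self hAX, ha]
      ext b
      simp [and_comm]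

lemma pdist_eq_sum (p : ℝ) (T₁ T₂ : UTree n) :
    pdist p T₁ T₂ = ∑ X ∈ quartets n, localPdist p (T₁.restrict X) (T₂.restrict X) := by
  have hcard : ∀ X ∈ quartets n, X.card = 4 := fun X hX => (mem_powersetCard.1 hX).2
  rw [sum_localPdist_eq p _ T₁.Resolved T₂.Resolved _ _
    (fun X hX => T₁.resolved_iff_hasCherry (by rw [hcard X hX]; decide))
    (fun X hX => T₂.resolved_iff_hasCherry (by rw [hcard X hX]; decide)) fun X hX h₁ h₂ => by
      rw [T₁.restrict_eq_filter_odd (hcard X hX) h₁, T₂.restrict_eq_filter_odd (hcard X hX) h₂]]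
  unfold pdist famPdistU famSetDU famSetR1U famSetR2U
  congr!

lemma relaxedPolygonal_pdist {p : ℝ} (hp0 : 0 < p) (hp1 : p ≤ 1) :
    RelaxedPolygonal (1 / p) (pdist p : UTree n → UTree n → ℝ) := by
  rw [funext₂ (pdist_eq_sum p)]
  exact .sum _ fun X _ => (relaxedPolygonal_localPdist hp0 hp1).comp (restrict · X)

end UTree

/-- **Theorem (part (iv)).**  For every `p ∈ (0, 1/2)`, the parametric triplet
(resp. quartet) distance `d⁽ᵖ⁾` is a near-metric: there is a constant `c > 0`,
independent of the size of the domain (in particular independent of the number `n`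
of taxa), such that for every chain `x = x₀, x₁, …, x_m = z` of trees with `m ≥ 2`,
`d⁽ᵖ⁾(x, z) ≤ c · (d⁽ᵖ⁾(x, x₁) + d⁽ᵖ⁾(x₁, x₂) + ⋯ + d⁽ᵖ⁾(x_{m-1}, z))`. -/
theorem pdist_near_metric (p : ℝ) (hp0 : 0 < p) (hp2 : p < 1 / 2) :
    ∃ c : ℝ, 0 < c ∧
      (∀ (n m : ℕ), 2 ≤ m → ∀ x : Fin (m + 1) → RTree n,
        RTree.pdist p (x 0) (x (Fin.last m)) ≤
          c * ∑ i : Fin m, RTree.pdist p (x i.castSucc) (x i.succ)) ∧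
      ∀ (n m : ℕ), 2 ≤ m → ∀ x : Fin (m + 1) → UTree n,
        UTree.pdist p (x 0) (x (Fin.last m)) ≤
          c * ∑ i : Fin m, UTree.pdist p (x i.castSucc) (x i.succ) := by
  have hp1 : p ≤ 1 := by linarith
  exact ⟨1 / p, by positivity, fun _ m _ x => RTree.relaxedPolygonal_pdist hp0 hp1 m x,
    fun _ m _ x => UTree.relaxedPolygonal_pdist hp0 hp1 m x⟩
end

section
/- Let P be a profile of length k of rooted (respectively unrooted) phylogenies over taxon set S such that every input tree P(i), i ∈ [k], is fully resolved. If p ≥ 2/3, then there exists a median tree T for P relative to the parametric triplet (respectively quartet) distance d^(p) such that T is fully resolved. -/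
open Finset

attribute [local instance] Classical.propDecidable

/-!
Every phylogeny `T` can be refined to a fully resolved one without moving it away from the
profile. Fix a linear order `σ` of the taxa and, at every node of `T`, attach the children one at
a time in the order of their least taxa. Averaged over all `σ`, a triplet (quartet) resolved in
`T` keeps its topology, while an unresolved one costs `p` against every (fully resolved) input
tree before refinement, and afterwards agrees with that input tree for at least a third of the
orders, so it costs at most `2/3 ≤ p` on average. Hence some refinement of `T` is at least as
close to the profile as `T`, and a fully resolved tree of least total distance is a median.
Unrooted trees are refined after rooting them at a leaf.
-/

namespace Phylogeny

variable {n : ℕ}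

def Nested (A B : Finset (Fin n)) : Prop :=
  A ⊆ B ∨ B ⊆ A ∨ A ∩ B = ∅

theorem Nested.symm {A B : Finset (Fin n)} (h : Nested A B) : Nested B A := by
  rcases h with h | h | h
  exacts [Or.inr (Or.inl h), Or.inl h, Or.inr (Or.inr (inter_comm A B ▸ h))]

def Compatible (A B : Finset (Fin n)) : Prop :=
  A ⊆ B ∨ B ⊆ A ∨ A ∩ B = ∅ ∨ A ∪ B = univ

theorem compatible_sdiff_right {A B : Finset (Fin n)} :
    Compatible A (univ \ B) ↔ Compatible A B := by
  simp only [Compatible, subset_iff, eq_empty_iff_forall_notMem, eq_univ_iff_forall, mem_inter,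
    mem_union, mem_sdiff, mem_univ, true_and]
  constructor
  · rintro (h | h | h | h)
    · exact Or.inr (Or.inr (Or.inl fun x hx => (h hx.1) hx.2))
    · exact Or.inr (Or.inr (Or.inr fun x => (em (x ∈ B)).elim Or.inr fun hB => Or.inl (h hB)))
    · exact Or.inl fun x hx => by_contra fun hB => h x ⟨hx, hB⟩
    · exact Or.inr (Or.inl fun x hx => (h x).resolve_right (not_not.2 hx))
  · rintro (h | h | h | h)
    · exact Or.inr (Or.inr (Or.inl fun x hx => hx.2 (h hx.1)))
    · exact Or.inr (Or.inr (Or.inr fun x => (em (x ∈ B)).elim (fun hB => Or.inl (h hB)) Or.inr))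
    · exact Or.inl fun x hx hB => h x ⟨hx, hB⟩
    · exact Or.inr (Or.inl fun x hB => (h x).resolve_right hB)

theorem Nested.compatible {A B : Finset (Fin n)} (h : Nested A B) : Compatible A B :=
  h.imp_right (Or.imp_right Or.inl)

theorem Compatible.symm {A B : Finset (Fin n)} (h : Compatible A B) : Compatible B A := by
  rcases h with h | h | h | h
  exacts [Or.inr (Or.inl h), Or.inl h, Or.inr (Or.inr (Or.inl (inter_comm A B ▸ h))),
    Or.inr (Or.inr (Or.inr (union_comm A B ▸ h)))]

/-- The cluster system of a rooted phylogeny with leaf set `support`. -/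
structure Hierarchy (n : ℕ) where
  clusters : Finset (Finset (Fin n))
  support : Finset (Fin n)
  support_mem : support ∈ clusters
  subset_support : ∀ A ∈ clusters, A ⊆ support
  singleton_mem : ∀ x ∈ support, ({x} : Finset (Fin n)) ∈ clusters
  empty_not_mem : ∅ ∉ clusters
  laminar : ∀ C ∈ clusters, ∀ D ∈ clusters, Nested C D

def children (F : Finset (Finset (Fin n))) (C : Finset (Fin n)) : Finset (Finset (Fin n)) :=
  F.filter fun D => D ⊂ C ∧ ∀ E ∈ F, D ⊂ E → ¬ E ⊂ C

noncomputable def rank (σ : Equiv.Perm (Fin n)) (D : Finset (Fin n)) : ℕ :=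
  if h : D.Nonempty then (σ (D.min' h) : ℕ) else 0

theorem rank_le (σ : Equiv.Perm (Fin n)) (D : Finset (Fin n)) : rank σ D ≤ n := by
  unfold rank
  split_ifs
  exacts [(σ _).isLt.le, Nat.zero_le n]

noncomputable def prefixUnion (F : Finset (Finset (Fin n))) (σ : Equiv.Perm (Fin n))
    (C : Finset (Fin n)) (y : ℕ) : Finset (Fin n) :=
  ((children F C).filter fun D => rank σ D ≤ y).sup id

/-- Adding all nonempty prefix unions turns every node into a caterpillar whose children are
attached in the order of their ranks. -/
noncomputable def refineClusters (F : Finset (Finset (Fin n))) (σ : Equiv.Perm (Fin n)) :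
    Finset (Finset (Fin n)) :=
  F ∪ ((F ×ˢ range (n + 1)).image fun q => prefixUnion F σ q.1 q.2).filter (· ≠ ∅)

namespace Hierarchy

variable {L : Hierarchy n} {σ : Equiv.Perm (Fin n)} {A C C' D D' E : Finset (Fin n)}

theorem nonempty_of_mem (hA : A ∈ L.clusters) : A.Nonempty :=
  nonempty_iff_ne_empty.2 fun h => L.empty_not_mem (h ▸ hA)

theorem mem_children :
    D ∈ children L.clusters C ↔
      D ∈ L.clusters ∧ D ⊂ C ∧ ∀ E ∈ L.clusters, D ⊂ E → ¬ E ⊂ C := by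
  simp [children]

theorem exists_mem_children (hC : C ∈ L.clusters) {x : Fin n} (hx : x ∈ C)
    (hne : {x} ≠ C) : ∃ D ∈ children L.clusters C, x ∈ D := by
  set s := L.clusters.filter fun D => x ∈ D ∧ D ⊂ C
  have hs : s.Nonempty := ⟨{x}, mem_filter.2 ⟨L.singleton_mem x (L.subset_support C hC hx),
    mem_singleton_self x, Finset.ssubset_iff_subset_ne.2 ⟨singleton_subset_iff.2 hx, hne⟩⟩⟩
  obtain ⟨D, hD, hmax⟩ := s.exists_max_image card hs
  obtain ⟨hDL, hxD, hDC⟩ := mem_filter.1 hD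
  refine ⟨D, mem_children.2 ⟨hDL, hDC, fun E hE hDE hEC => ?_⟩, hxD⟩
  exact (hmax E (mem_filter.2 ⟨hE, hDE.subset hxD, hEC⟩)).not_gt (card_lt_card hDE)

theorem disjoint_of_mem_children (hD : D ∈ children L.clusters C)
    (hD' : D' ∈ children L.clusters C) (hne : D ≠ D') : Disjoint D D' := by
  rw [mem_children] at hD hD'
  rcases L.laminar D hD.1 D' hD'.1 with h | h | h
  · exact absurd hD'.2.1 (hD.2.2 D' hD'.1 (Finset.ssubset_iff_subset_ne.2 ⟨h, hne⟩))
  · exact absurd hD.2.1 (hD'.2.2 D hD.1 (Finset.ssubset_iff_subset_ne.2 ⟨h, hne.symm⟩))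
  · exact disjoint_iff_inter_eq_empty.2 h

theorem eq_of_mem_children (hD : D ∈ children L.clusters C) (hD' : D' ∈ children L.clusters C)
    {x : Fin n} (hx : x ∈ D) (hx' : x ∈ D') : D = D' := by
  by_contra hne
  exact disjoint_left.1 (disjoint_of_mem_children hD hD' hne) hx hx'

theorem exists_mem_children_superset (hC : C ∈ L.clusters) (hE : E ∈ L.clusters)
    (hEC : E ⊂ C) : ∃ D ∈ children L.clusters C, E ⊆ D := by
  obtain ⟨x, hx⟩ := L.nonempty_of_mem hE
  have hne : {x} ≠ C := by
    rintro rfl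
    obtain rfl | rfl := subset_singleton_iff.1 hEC.subset
    · exact L.empty_not_mem hE
    · exact hEC.ne rfl
  obtain ⟨D, hD, hxD⟩ := exists_mem_children hC (hEC.subset hx) hne
  have hDL := (mem_children.1 hD).1
  rcases L.laminar E hE D hDL with h | h | h
  · exact ⟨D, hD, h⟩
  · obtain rfl | hne := eq_or_ne D E
    · exact ⟨D, hD, subset_rfl⟩
    · exact absurd hEC ((mem_children.1 hD).2.2 E hE (Finset.ssubset_iff_subset_ne.2 ⟨h, hne⟩))
  · exact absurd (mem_inter.2 ⟨hx, hxD⟩) (h ▸ notMem_empty x)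

theorem mem_prefixUnion {y : ℕ} {x : Fin n} :
    x ∈ prefixUnion L.clusters σ C y ↔
      ∃ D ∈ children L.clusters C, rank σ D ≤ y ∧ x ∈ D := by
  simp only [prefixUnion, mem_sup, mem_filter, id, and_assoc]

theorem prefixUnion_subset {y : ℕ} : prefixUnion L.clusters σ C y ⊆ C := by
  intro x hx
  obtain ⟨D, hD, -, hxD⟩ := mem_prefixUnion.1 hx
  exact (mem_children.1 hD).2.1.subset hxD

theorem prefixUnion_mono {y y' : ℕ} (h : y ≤ y') :
    prefixUnion L.clusters σ C y ⊆ prefixUnion L.clusters σ C y' := by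
  intro x hx
  obtain ⟨D, hD, hk, hxD⟩ := mem_prefixUnion.1 hx
  exact mem_prefixUnion.2 ⟨D, hD, hk.trans h, hxD⟩

theorem subset_or_disjoint_prefixUnion (hD : D ∈ children L.clusters C) (hA : A ⊆ D) (y : ℕ) :
    A ⊆ prefixUnion L.clusters σ C y ∨ A ∩ prefixUnion L.clusters σ C y = ∅ := by
  by_cases hk : rank σ D ≤ y
  · exact Or.inl fun x hx => mem_prefixUnion.2 ⟨D, hD, hk, hA hx⟩
  · refine Or.inr (eq_empty_iff_forall_notMem.2 fun x hx => ?_)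
    obtain ⟨D', hD', hk', hxD'⟩ := mem_prefixUnion.1 (mem_inter.1 hx).2
    exact hk (eq_of_mem_children hD hD' (hA (mem_inter.1 hx).1) hxD' ▸ hk')

theorem nested_prefixUnion (hA : A ∈ L.clusters) (hC : C ∈ L.clusters) (y : ℕ) :
    Nested A (prefixUnion L.clusters σ C y) := by
  rcases L.laminar A hA C hC with hAC | hCA | hAC
  · obtain rfl | hne := eq_or_ne A C
    · exact Or.inr (Or.inl prefixUnion_subset)
    · obtain ⟨D, hD, hAD⟩ :=
        exists_mem_children_superset hC hA (Finset.ssubset_iff_subset_ne.2 ⟨hAC, hne⟩)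
      exact (subset_or_disjoint_prefixUnion hD hAD y).imp_right Or.inr
  · exact Or.inr (Or.inl (prefixUnion_subset.trans hCA))
  · exact Or.inr (Or.inr (subset_empty.1 (hAC ▸ inter_subset_inter_left prefixUnion_subset)))

theorem nested_prefixUnion_prefixUnion (hC : C ∈ L.clusters) (hC' : C' ∈ L.clusters)
    (y y' : ℕ) : Nested (prefixUnion L.clusters σ C y) (prefixUnion L.clusters σ C' y') := by
  wlog h : C ⊆ C' ∨ C ∩ C' = ∅ generalizing C C' y y'
  · refine (this hC' hC y' y ?_).symm
    rcases L.laminar C hC C' hC' with h' | h' | h'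
    exacts [absurd (Or.inl h') h, Or.inl h', Or.inr (inter_comm C C' ▸ h')]
  rcases h with h | h
  · obtain rfl | hne := eq_or_ne C C'
    · rcases le_total y y' with hy | hy
      exacts [Or.inl (prefixUnion_mono hy), Or.inr (Or.inl (prefixUnion_mono hy))]
    · obtain ⟨D, hD, hCD⟩ :=
        exists_mem_children_superset hC' hC (Finset.ssubset_iff_subset_ne.2 ⟨h, hne⟩)
      exact subset_or_disjoint_prefixUnion hD (prefixUnion_subset.trans hCD) y' |>.imp_right Or.inr
  · exact Or.inr (Or.inr (subset_empty.1 (h ▸ inter_subset_inter prefixUnion_subset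
      prefixUnion_subset)))

theorem mem_refineClusters :
    A ∈ refineClusters L.clusters σ ↔ A ∈ L.clusters ∨
      (∃ C ∈ L.clusters, ∃ y ≤ n, prefixUnion L.clusters σ C y = A) ∧ A ≠ ∅ := by
  simp only [refineClusters, mem_union, mem_filter, mem_image, mem_product, mem_range,
    Prod.exists, Nat.lt_succ_iff]
  constructor
  · rintro (h | ⟨⟨C, y, ⟨hC, hy⟩, rfl⟩, hne⟩)
    exacts [Or.inl h, Or.inr ⟨⟨C, hC, y, hy, rfl⟩, hne⟩]
  · rintro (h | ⟨⟨C, hC, y, hy, rfl⟩, hne⟩)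
    exacts [Or.inl h, Or.inr ⟨⟨C, y, ⟨hC, hy⟩, rfl⟩, hne⟩]

theorem clusters_subset_refineClusters : L.clusters ⊆ refineClusters L.clusters σ :=
  subset_union_left

theorem laminar_refineClusters :
    ∀ A ∈ refineClusters L.clusters σ, ∀ B ∈ refineClusters L.clusters σ, Nested A B := by
  intro A hA B hB
  rcases mem_refineClusters.1 hA with hA | ⟨⟨C, hC, y, -, rfl⟩, -⟩ <;>
    rcases mem_refineClusters.1 hB with hB | ⟨⟨C', hC', y', -, rfl⟩, -⟩
  · exact L.laminar A hA B hB
  · exact nested_prefixUnion hA hC' y'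
  · exact (nested_prefixUnion hB hC y).symm
  · exact nested_prefixUnion_prefixUnion hC hC' y y'

noncomputable def refine (L : Hierarchy n) (σ : Equiv.Perm (Fin n)) : Hierarchy n where
  clusters := refineClusters L.clusters σ
  support := L.support
  support_mem := clusters_subset_refineClusters L.support_mem
  subset_support A hA := by
    rcases mem_refineClusters.1 hA with h | ⟨⟨C, hC, y, -, rfl⟩, -⟩
    exacts [L.subset_support A h, prefixUnion_subset.trans (L.subset_support C hC)]
  singleton_mem x hx := clusters_subset_refineClusters (L.singleton_mem x hx)
  empty_not_mem h := (mem_refineClusters.1 h).elim L.empty_not_mem fun h => h.2 rfl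
  laminar := laminar_refineClusters

def star (Ω : Finset (Fin n)) (hΩ : Ω.Nonempty) : Hierarchy n where
  clusters := insert Ω (Ω.image fun x => {x})
  support := Ω
  support_mem := mem_insert_self _ _
  subset_support A hA := by
    rcases mem_insert.1 hA with rfl | hA
    · exact subset_rfl
    · obtain ⟨x, hx, rfl⟩ := mem_image.1 hA
      exact singleton_subset_iff.2 hx
  singleton_mem x hx := mem_insert_of_mem (mem_image_of_mem _ hx)
  empty_not_mem h := by
    rcases mem_insert.1 h with h | h
    · exact hΩ.ne_empty h.symm
    · obtain ⟨x, -, hx⟩ := mem_image.1 h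
      exact singleton_ne_empty x hx
  laminar C hC D hD := by
    simp only [mem_insert, mem_image] at hC hD
    rcases hC with rfl | ⟨x, hx, rfl⟩ <;> rcases hD with rfl | ⟨y, hy, rfl⟩
    · exact Or.inl subset_rfl
    · exact Or.inr (Or.inl (singleton_subset_iff.2 hy))
    · exact Or.inl (singleton_subset_iff.2 hx)
    · obtain rfl | hxy := eq_or_ne x y
      · exact Or.inl subset_rfl
      · exact Or.inr (Or.inr (singleton_inter_of_notMem (mem_singleton.not.2 hxy)))

def toRTree (L : Hierarchy n) (hL : L.support = univ) : RTree n :=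
  ⟨L.clusters, hL ▸ L.support_mem, fun x => L.singleton_mem x (hL ▸ mem_univ x),
    L.empty_not_mem, L.laminar⟩

theorem compatible_of_mem (L : Hierarchy n) {A B : Finset (Fin n)} (hA : A ∈ L.clusters)
    (hB : B ∈ L.clusters) : Compatible A B :=
  (L.laminar A hA B hB).compatible

/-- Attach the leaf `t` above the root of `L` and forget the root. -/
def toUTree (L : Hierarchy n) (t : Fin n) (hL : L.support = univ \ {t}) : UTree n where
  splits := L.clusters ∪ L.clusters.image (univ \ ·)
  empty_not_mem h := by
    rcases mem_union.1 h with h | h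
    · exact L.empty_not_mem h
    · obtain ⟨A, hA, hAe⟩ := mem_image.1 h
      have htA : t ∉ A := fun ht => by simpa [hL] using L.subset_support A hA ht
      exact notMem_empty t (hAe ▸ mem_sdiff.2 ⟨mem_univ t, htA⟩)
  trivial_mem x := by
    refine Or.inr (mem_union.2 ?_)
    by_cases hx : x = t
    · refine Or.inr (mem_image.2 ⟨L.support, L.support_mem, ?_⟩)
      rw [hL, Finset.sdiff_sdiff_eq_self (subset_univ _), hx]
    · exact Or.inl (L.singleton_mem x (by simp [hL, hx]))
  compl_mem A hA := by
    rcases mem_union.1 hA with h | h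
    · exact mem_union.2 (Or.inr (mem_image_of_mem _ h))
    · obtain ⟨B, hB, rfl⟩ := mem_image.1 h
      rw [Finset.sdiff_sdiff_eq_self (subset_univ _)]
      exact mem_union.2 (Or.inl hB)
  compat A hA B hB := by
    rcases mem_union.1 hA with hA | hA <;> rcases mem_union.1 hB with hB | hB
    · exact L.compatible_of_mem hA hB
    · obtain ⟨B', hB', rfl⟩ := mem_image.1 hB
      exact compatible_sdiff_right.2 (L.compatible_of_mem hA hB')
    · obtain ⟨A', hA', rfl⟩ := mem_image.1 hA
      exact (compatible_sdiff_right.2 (L.compatible_of_mem hB hA')).symm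
    · obtain ⟨A', hA', rfl⟩ := mem_image.1 hA
      obtain ⟨B', hB', rfl⟩ := mem_image.1 hB
      exact compatible_sdiff_right.2
        (compatible_sdiff_right.2 (L.compatible_of_mem hB' hA')).symm

end Hierarchy

theorem swap_apply_mem {α : Type*} [DecidableEq α] {s : Finset α} {a b x : α} (ha : a ∈ s)
    (hb : b ∈ s) (hx : x ∈ s) : Equiv.swap a b x ∈ s := by
  rw [Equiv.swap_apply_def]
  split_ifs <;> assumption

theorem swap_apply_of_injOn {α β : Type*} [DecidableEq α] [DecidableEq β] {g : α → β}
    {s : Finset α} (hg : Set.InjOn g s) {a b x : α} (ha : a ∈ s) (hb : b ∈ s) (hx : x ∈ s) :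
    Equiv.swap (g a) (g b) (g x) = g (Equiv.swap a b x) := by
  by_cases hxa : x = a
  · subst hxa; simp
  by_cases hxb : x = b
  · subst hxb; simp
  rw [Equiv.swap_apply_of_ne_of_ne hxa hxb, Equiv.swap_apply_of_ne_of_ne
    (fun h => hxa (hg hx ha h)) (fun h => hxb (hg hx hb h))]

section Fan

open Hierarchy

variable {L : Hierarchy n} {X C : Finset (Fin n)} {f : Fin n → Finset (Fin n)}
  {σ : Equiv.Perm (Fin n)}

structure IsFan (L : Hierarchy n) (X C : Finset (Fin n)) (f : Fin n → Finset (Fin n)) :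
    Prop where
  mem : C ∈ L.clusters
  three_le_card : 3 ≤ (C ∩ X).card
  child_mem : ∀ x ∈ C ∩ X, f x ∈ children L.clusters C
  mem_child : ∀ x ∈ C ∩ X, x ∈ f x
  child_inter : ∀ x ∈ C ∩ X, f x ∩ X = {x}

noncomputable def childMin (f : Fin n → Finset (Fin n)) (x : Fin n) : Fin n :=
  if h : (f x).Nonempty then (f x).min' h else x

structure IsLeadingPair (σ : Equiv.Perm (Fin n)) (f : Fin n → Finset (Fin n))
    (S T : Finset (Fin n)) : Prop where
  subset : T ⊆ S
  card_eq : T.card = 2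
  rank_lt : ∀ u ∈ T, ∀ v ∈ S, v ∉ T → rank σ (f u) < rank σ (f v)

theorem IsLeadingPair.unique {S T T' : Finset (Fin n)} (hT : IsLeadingPair σ f S T)
    (hT' : IsLeadingPair σ f S T') : T = T' := by
  by_contra hne
  have hcard : T.card = T'.card := by rw [hT.card_eq, hT'.card_eq]
  obtain ⟨u, hu, hu'⟩ := not_subset.1 fun h => hne (eq_of_subset_of_card_le h hcard.ge)
  obtain ⟨v, hv, hv'⟩ := not_subset.1 fun h => hne (eq_of_subset_of_card_le h hcard.le).symm
  exact (hT.rank_lt u hu v (hT'.subset hv) hv').asymm (hT'.rank_lt v hv u (hT.subset hu) hu')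

namespace IsFan

theorem rank_eq (h : IsFan L X C f) (σ : Equiv.Perm (Fin n)) {x : Fin n} (hx : x ∈ C ∩ X) :
    rank σ (f x) = σ (childMin f x) := by
  have hne : (f x).Nonempty := ⟨x, h.mem_child x hx⟩
  rw [rank, childMin, dif_pos hne, dif_pos hne]

theorem childMin_mem (h : IsFan L X C f) {x : Fin n} (hx : x ∈ C ∩ X) :
    childMin f x ∈ f x := by
  rw [childMin, dif_pos ⟨x, h.mem_child x hx⟩]
  exact min'_mem _ _

theorem childMin_injOn (h : IsFan L X C f) : Set.InjOn (childMin f) (C ∩ X : Finset (Fin n)) := by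
  intro x hx x' hx' he
  have hf : f x = f x' := eq_of_mem_children (h.child_mem x hx) (h.child_mem x' hx')
    (h.childMin_mem hx) (he ▸ h.childMin_mem hx')
  have : x' ∈ f x ∩ X := mem_inter.2 ⟨hf ▸ h.mem_child x' hx', (mem_inter.1 hx').2⟩
  rw [h.child_inter x hx] at this
  exact (mem_singleton.1 this).symm

theorem rank_injOn (h : IsFan L X C f) (σ : Equiv.Perm (Fin n)) {x x' : Fin n}
    (hx : x ∈ C ∩ X) (hx' : x' ∈ C ∩ X) (he : rank σ (f x) = rank σ (f x')) : x = x' := by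
  rw [h.rank_eq σ hx, h.rank_eq σ hx'] at he
  exact h.childMin_injOn hx hx' (σ.injective (Fin.val_injective he))

theorem exists_isLeadingPair (h : IsFan L X C f) (σ : Equiv.Perm (Fin n)) :
    ∃ T, IsLeadingPair σ f (C ∩ X) T := by
  have h3 := h.three_le_card
  set S := C ∩ X
  obtain ⟨x₁, hx₁, hmin₁⟩ :=
    S.exists_min_image (fun x => rank σ (f x)) (card_pos.1 (by omega))
  obtain ⟨x₂, hx₂, hmin₂⟩ := (S.erase x₁).exists_min_image (fun x => rank σ (f x))
    (card_pos.1 (by rw [card_erase_of_mem hx₁]; omega))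
  obtain ⟨hx₂₁, hx₂S⟩ := mem_erase.1 hx₂
  have hlt : ∀ x ∈ S, ∀ v ∈ S, v ≠ x → rank σ (f x) ≤ rank σ (f v) →
      rank σ (f x) < rank σ (f v) :=
    fun x hx v hv hvx hle => hle.lt_of_ne fun he => hvx (h.rank_injOn σ hx hv he).symm
  refine ⟨{x₁, x₂}, ⟨?_, card_pair hx₂₁.symm, ?_⟩⟩
  · exact insert_subset hx₁ (singleton_subset_iff.2 hx₂S)
  · intro u hu v hv hvT
    simp only [mem_insert, mem_singleton, not_or] at hu hvT
    rcases hu with rfl | rfl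
    · exact hlt _ hx₁ v hv hvT.1 (hmin₁ v hv)
    · exact hlt _ hx₂S v hv hvT.2 (hmin₂ v (mem_erase.2 ⟨hvT.1, hv⟩))

theorem mem_prefixUnion (h : IsFan L X C f) {x : Fin n} (hx : x ∈ C ∩ X) {y : ℕ}
    (hy : rank σ (f x) ≤ y) : x ∈ prefixUnion L.clusters σ C y :=
  Hierarchy.mem_prefixUnion.2 ⟨f x, h.child_mem x hx, hy, h.mem_child x hx⟩

theorem exists_refineClusters_inter_eq (h : IsFan L X C f) {T : Finset (Fin n)}
    (hT : IsLeadingPair σ f (C ∩ X) T) :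
    ∃ A ∈ refineClusters L.clusters σ, A ∩ X = T := by
  obtain ⟨u₁, u₂, -, rfl⟩ := card_eq_two.1 hT.card_eq
  have hu₁ : u₁ ∈ C ∩ X := hT.subset (mem_insert_self _ _)
  have hu₂ : u₂ ∈ C ∩ X := hT.subset (mem_insert_of_mem (mem_singleton_self _))
  set y := max (rank σ (f u₁)) (rank σ (f u₂))
  have hu₁y : u₁ ∈ prefixUnion L.clusters σ C y := h.mem_prefixUnion hu₁ (le_max_left _ _)
  have hu₂y : u₂ ∈ prefixUnion L.clusters σ C y := h.mem_prefixUnion hu₂ (le_max_right _ _)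
  refine ⟨prefixUnion L.clusters σ C y, mem_refineClusters.2 (Or.inr
    ⟨⟨C, h.mem, y, max_le (rank_le _ _) (rank_le _ _), rfl⟩, ne_empty_of_mem hu₁y⟩), ?_⟩
  ext z
  constructor
  · rintro hz
    obtain ⟨hzy, hzX⟩ := mem_inter.1 hz
    have hzS : z ∈ C ∩ X := mem_inter.2 ⟨prefixUnion_subset hzy, hzX⟩
    obtain ⟨D, hD, hDy, hzD⟩ := Hierarchy.mem_prefixUnion.1 hzy
    obtain rfl := eq_of_mem_children hD (h.child_mem z hzS) hzD (h.mem_child z hzS)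
    by_contra hzT
    exact (max_lt (hT.rank_lt u₁ (mem_insert_self _ _) z hzS hzT)
      (hT.rank_lt u₂ (mem_insert_of_mem (mem_singleton_self _)) z hzS hzT)).not_ge hDy
  · intro hz
    rcases mem_insert.1 hz with rfl | hz
    · exact mem_inter.2 ⟨hu₁y, (mem_inter.1 hu₁).2⟩
    · obtain rfl := mem_singleton.1 hz
      exact mem_inter.2 ⟨hu₂y, (mem_inter.1 hu₂).2⟩

theorem rank_mul_swap (h : IsFan L X C f) {a b x : Fin n} (ha : a ∈ C ∩ X) (hb : b ∈ C ∩ X)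
    (hx : x ∈ C ∩ X) (σ : Equiv.Perm (Fin n)) :
    rank (σ * Equiv.swap (childMin f a) (childMin f b)) (f x) =
      rank σ (f (Equiv.swap a b x)) := by
  rw [h.rank_eq _ hx, h.rank_eq _ (swap_apply_mem ha hb hx), Equiv.Perm.mul_apply,
    swap_apply_of_injOn h.childMin_injOn ha hb hx]

theorem isLeadingPair_mul_swap (h : IsFan L X C f) {a b : Fin n} (ha : a ∈ C ∩ X)
    (hb : b ∈ C ∩ X) {T : Finset (Fin n)} (hT : IsLeadingPair σ f (C ∩ X) T) :
    IsLeadingPair (σ * Equiv.swap (childMin f a) (childMin f b)) f (C ∩ X)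
      (T.image (Equiv.swap a b)) := by
  refine ⟨fun z hz => ?_, ?_, fun u hu v hv hvT => ?_⟩
  · obtain ⟨w, hw, rfl⟩ := mem_image.1 hz
    exact swap_apply_mem ha hb (hT.subset hw)
  · rw [card_image_of_injective _ (Equiv.injective _), hT.card_eq]
  · obtain ⟨w, hw, rfl⟩ := mem_image.1 hu
    rw [h.rank_mul_swap ha hb (swap_apply_mem ha hb (hT.subset hw)), h.rank_mul_swap ha hb hv,
      Equiv.swap_apply_self]
    refine hT.rank_lt w hw _ (swap_apply_mem ha hb hv) fun hvT' => hvT ?_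
    exact mem_image.2 ⟨_, hvT', Equiv.swap_apply_self _ _ _⟩

theorem card_isLeadingPair_image_swap (h : IsFan L X C f) {a b : Fin n} (ha : a ∈ C ∩ X)
    (hb : b ∈ C ∩ X) (T : Finset (Fin n)) :
    (univ.filter fun σ => IsLeadingPair σ f (C ∩ X) (T.image (Equiv.swap a b))).card =
      (univ.filter fun σ => IsLeadingPair σ f (C ∩ X) T).card := by
  set τ := Equiv.swap (childMin f a) (childMin f b)
  have hτ : ∀ σ : Equiv.Perm (Fin n), σ * τ * τ = σ := fun σ => by
    rw [mul_assoc, Equiv.swap_mul_self, mul_one]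
  have himage : (T.image (Equiv.swap a b)).image (Equiv.swap a b) = T := by
    simp [image_image, Function.comp_def, Equiv.swap_apply_self]
  refine card_nbij' (· * τ) (· * τ) (fun σ hσ => ?_) (fun σ hσ => ?_) (fun σ _ => hτ σ)
    (fun σ _ => hτ σ)
  · simpa [himage] using h.isLeadingPair_mul_swap ha hb (mem_filter.1 hσ).2
  · simpa using h.isLeadingPair_mul_swap ha hb (mem_filter.1 hσ).2

theorem card_isLeadingPair_eq (h : IsFan L X C f) {T T' : Finset (Fin n)}
    (hT : T ∈ (C ∩ X).powersetCard 2) (hT' : T' ∈ (C ∩ X).powersetCard 2) :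
    (univ.filter fun σ => IsLeadingPair σ f (C ∩ X) T).card =
      (univ.filter fun σ => IsLeadingPair σ f (C ∩ X) T').card := by
  obtain ⟨hTS, hT2⟩ := mem_powersetCard.1 hT
  obtain ⟨hT'S, hT'2⟩ := mem_powersetCard.1 hT'
  obtain ⟨u, v, huv, rfl⟩ := card_eq_two.1 hT2
  obtain ⟨u', v', huv', rfl⟩ := card_eq_two.1 hT'2
  have hu := hTS (mem_insert_self _ _)
  have hv := hTS (mem_insert_of_mem (mem_singleton_self _))
  have hu' := hT'S (mem_insert_self _ _)
  have hv' := hT'S (mem_insert_of_mem (mem_singleton_self _))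
  -- `swap u u'` moves `{u, v}` to `{u', w}`, then `swap w v'` moves it to `{u', v'}`
  set w := Equiv.swap u u' v
  have hw : w ∈ C ∩ X := swap_apply_mem hu hu' hv
  have hwu' : w ≠ u' := fun he =>
    huv ((Equiv.swap u u').injective (he.trans (Equiv.swap_apply_left u u').symm)).symm
  calc _ = (univ.filter fun σ => IsLeadingPair σ f (C ∩ X) {u', w}).card := by
        rw [← h.card_isLeadingPair_image_swap hu hu', image_insert, image_singleton,
          Equiv.swap_apply_left]
    _ = _ := by
        rw [← h.card_isLeadingPair_image_swap hw hv', image_insert, image_singleton,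
          Equiv.swap_apply_left, Equiv.swap_apply_of_ne_of_ne hwu'.symm huv']

theorem sum_card_isLeadingPair (h : IsFan L X C f) :
    ∑ T ∈ (C ∩ X).powersetCard 2,
        (univ.filter fun σ => IsLeadingPair σ f (C ∩ X) T).card =
      Fintype.card (Equiv.Perm (Fin n)) := by
  choose pair hpair using h.exists_isLeadingPair
  have hmem : ∀ σ ∈ (univ : Finset (Equiv.Perm (Fin n))),
      pair σ ∈ (C ∩ X).powersetCard 2 := fun σ _ =>
    mem_powersetCard.2 ⟨(hpair σ).subset, (hpair σ).card_eq⟩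
  rw [← card_univ, card_eq_sum_card_fiberwise hmem]
  refine sum_congr rfl fun T _ => congrArg card (filter_congr fun σ _ => ?_)
  exact ⟨fun hT => (hpair σ).unique hT, fun hT => hT ▸ hpair σ⟩

theorem card_isLeadingPair_mul_choose (h : IsFan L X C f) {T : Finset (Fin n)}
    (hT : T ∈ (C ∩ X).powersetCard 2) :
    (univ.filter fun σ => IsLeadingPair σ f (C ∩ X) T).card * (C ∩ X).card.choose 2 =
      Fintype.card (Equiv.Perm (Fin n)) := by
  rw [← h.sum_card_isLeadingPair, sum_congr rfl fun T' hT' => h.card_isLeadingPair_eq hT' hT,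
    sum_const, card_powersetCard, smul_eq_mul, mul_comm]

end IsFan

end Fan

section Resolution

open Hierarchy

variable {L : Hierarchy n} {X : Finset (Fin n)}

/-- If `X` is unresolved, the least cluster containing two taxa of `X` is a fan for `X`. -/
theorem exists_isFan (hX : X ⊆ L.support) (h2 : 2 ≤ X.card)
    (hunres : ¬ famResolved L.clusters X) : ∃ C f, IsFan L X C f := by
  have hM : (L.clusters.filter fun C => 2 ≤ (C ∩ X).card).Nonempty :=
    ⟨L.support, mem_filter.2 ⟨L.support_mem, by rwa [inter_eq_right.2 hX]⟩⟩
  obtain ⟨C, hC, hmin⟩ :=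
    (L.clusters.filter fun C => 2 ≤ (C ∩ X).card).exists_min_image card hM
  obtain ⟨hCL, hC2⟩ := mem_filter.1 hC
  have h3 : 3 ≤ (C ∩ X).card := lt_of_le_of_ne hC2 fun h => hunres ⟨C, hCL, h.symm⟩
  have hchild : ∀ x ∈ C ∩ X, ∃ D ∈ children L.clusters C, x ∈ D ∧ D ∩ X = {x} := by
    intro x hx
    have hne : {x} ≠ C := by
      rintro rfl
      have := card_le_card (inter_subset_left : {x} ∩ X ⊆ {x})
      rw [card_singleton] at this
      omega
    obtain ⟨D, hD, hxD⟩ := exists_mem_children hCL (mem_inter.1 hx).1 hne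
    obtain ⟨hDL, hDC, -⟩ := mem_children.1 hD
    have hD1 : (D ∩ X).card ≤ 1 := by
      by_contra! hD2
      exact (hmin D (mem_filter.2 ⟨hDL, hD2⟩)).not_gt (card_lt_card hDC)
    have hxDX : x ∈ D ∩ X := mem_inter.2 ⟨hxD, (mem_inter.1 hx).2⟩
    exact ⟨D, hD, hxD, eq_singleton_iff_unique_mem.2
      ⟨hxDX, fun y hy => card_le_one.1 hD1 y hy x hxDX⟩⟩
  choose! f hf using hchild
  exact ⟨C, f, hCL, h3, fun x hx => (hf x hx).1, fun x hx => (hf x hx).2.1,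
    fun x hx => (hf x hx).2.2⟩

theorem famResolved_refine (σ : Equiv.Perm (Fin n)) (hX : X ⊆ L.support) (h2 : 2 ≤ X.card) :
    famResolved (L.refine σ).clusters X := by
  by_cases hres : famResolved L.clusters X
  · obtain ⟨C, hC, hC2⟩ := hres
    exact ⟨C, clusters_subset_refineClusters hC, hC2⟩
  · obtain ⟨C, f, h⟩ := exists_isFan hX h2 hres
    obtain ⟨T, hT⟩ := h.exists_isLeadingPair σ
    obtain ⟨A, hA, hAT⟩ := h.exists_refineClusters_inter_eq hT
    exact ⟨A, hA, hAT ▸ hT.card_eq⟩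

theorem IsFan.filter_isLeadingPair_subset {C : Finset (Fin n)} {f : Fin n → Finset (Fin n)}
    (h : IsFan L X C f) (T : Finset (Fin n)) :
    univ.filter (fun σ => IsLeadingPair σ f (C ∩ X) T) ⊆
      univ.filter fun σ => ∃ A ∈ refineClusters L.clusters σ, A ∩ X = T :=
  monotone_filter_right _ fun _ _ hσ => h.exists_refineClusters_inter_eq hσ

theorem card_perm_le_of_card_eq_three (hX : X ⊆ L.support) (h3 : X.card = 3)
    (hunres : ¬ famResolved L.clusters X) {Q : Finset (Fin n)} (hQX : Q ⊆ X) (hQ : Q.card = 2) :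
    Fintype.card (Equiv.Perm (Fin n)) ≤
      3 * (univ.filter fun σ => ∃ A ∈ refineClusters L.clusters σ, A ∩ X = Q).card := by
  obtain ⟨C, f, h⟩ := exists_isFan hX (by omega) hunres
  have hS : C ∩ X = X := eq_of_subset_of_card_le inter_subset_right (h3 ▸ h.three_le_card)
  have hcount := h.card_isLeadingPair_mul_choose (mem_powersetCard.2 ⟨hQX.trans hS.ge, hQ⟩)
  have hle := card_le_card (h.filter_isLeadingPair_subset Q)
  rw [hS, h3, show Nat.choose 3 2 = 3 from rfl] at hcount
  rw [hS] at hle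
  omega

theorem subset_or_sdiff_subset {α : Type*} [DecidableEq α] {S X Q : Finset α} (hQX : Q ⊆ X)
    (hS : (X \ S).card ≤ 1) : Q ⊆ S ∨ X \ Q ⊆ S := by
  by_contra! ⟨hQS, hQ'S⟩
  obtain ⟨q, hqQ, hqS⟩ := not_subset.1 hQS
  obtain ⟨z, hz, hzS⟩ := not_subset.1 hQ'S
  obtain ⟨hzX, hzQ⟩ := mem_sdiff.1 hz
  exact hzQ
    (card_le_one.1 hS z (mem_sdiff.2 ⟨hzX, hzS⟩) q (mem_sdiff.2 ⟨hQX hqQ, hqS⟩) ▸ hqQ)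

theorem card_perm_le_of_card_eq_four (hX : X ⊆ L.support) (h4 : X.card = 4)
    (hunres : ¬ famResolved L.clusters X) {Q : Finset (Fin n)} (hQX : Q ⊆ X) (hQ : Q.card = 2) :
    Fintype.card (Equiv.Perm (Fin n)) ≤ 3 * (univ.filter fun σ =>
      ∃ A ∈ refineClusters L.clusters σ, A ∩ X = Q ∨ A ∩ X = X \ Q).card := by
  obtain ⟨C, f, h⟩ := exists_isFan hX (by omega) hunres
  have hXQ : (X \ Q).card = 2 := by rw [card_sdiff_of_subset hQX]; omega
  have hS4 : (C ∩ X).card ≤ 4 := h4 ▸ card_le_card inter_subset_right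
  have hsub : ∀ T, (T = Q ∨ T = X \ Q) →
      univ.filter (fun σ => IsLeadingPair σ f (C ∩ X) T) ⊆ univ.filter fun σ =>
        ∃ A ∈ refineClusters L.clusters σ, A ∩ X = Q ∨ A ∩ X = X \ Q := by
    rintro T hT
    refine (h.filter_isLeadingPair_subset T).trans (monotone_filter_right _ ?_)
    rintro σ - ⟨A, hA, rfl⟩
    exact ⟨A, hA, hT⟩
  rcases h.three_le_card.eq_or_lt with hS3 | hS3
  · have hpair : ∀ T ⊆ C ∩ X, T.card = 2 → (T = Q ∨ T = X \ Q) → Fintype.card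
        (Equiv.Perm (Fin n)) ≤ 3 * (univ.filter fun σ =>
          ∃ A ∈ refineClusters L.clusters σ, A ∩ X = Q ∨ A ∩ X = X \ Q).card := by
      intro T hTS hT2 hTQ
      have := h.card_isLeadingPair_mul_choose (mem_powersetCard.2 ⟨hTS, hT2⟩)
      rw [← hS3, show Nat.choose 3 2 = 3 from rfl] at this
      have := card_le_card (hsub T hTQ)
      omega
    -- one of the pairs `Q`, `X \ Q` avoids the only taxon of `X` outside `C`
    rcases subset_or_sdiff_subset (S := C ∩ X) hQX
      (by rw [card_sdiff_of_subset inter_subset_right]; omega) with hQS | hQS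
    exacts [hpair Q hQS hQ (Or.inl rfl), hpair _ hQS hXQ (Or.inr rfl)]
  · have hS : C ∩ X = X := eq_of_subset_of_card_le inter_subset_right (by omega)
    have hQmem : Q ∈ (C ∩ X).powersetCard 2 := mem_powersetCard.2 ⟨hQX.trans hS.ge, hQ⟩
    have hQ'mem : X \ Q ∈ (C ∩ X).powersetCard 2 :=
      mem_powersetCard.2 ⟨sdiff_subset.trans hS.ge, hXQ⟩
    have hmul := h.card_isLeadingPair_mul_choose hQmem
    rw [show (C ∩ X).card = 4 by rw [hS, h4], show Nat.choose 4 2 = 6 from rfl] at hmul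
    have hdisj : Disjoint (univ.filter fun σ => IsLeadingPair σ f (C ∩ X) Q)
        (univ.filter fun σ => IsLeadingPair σ f (C ∩ X) (X \ Q)) := by
      refine disjoint_filter.2 fun σ _ hQσ hQ'σ => ?_
      obtain ⟨q, hq⟩ := card_pos.1 (hQ ▸ two_pos)
      exact (mem_sdiff.1 (hQσ.unique hQ'σ ▸ hq)).2 hq
    have hunion := card_le_card (union_subset (hsub Q (Or.inl rfl)) (hsub (X \ Q) (Or.inr rfl)))
    rw [card_union_of_disjoint hdisj, ← h.card_isLeadingPair_eq hQmem hQ'mem] at hunion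
    omega

end Resolution

section Cost

/-- The contribution to `d⁽ᵖ⁾(T, G)` of a triplet (quartet) resolved in `G`: `0` or `1` if it
is resolved in `T` in the same or in a different way, and `p` if it is unresolved in `T`. -/
noncomputable def siteCost (p : ℝ) (resolved agrees : Prop) : ℝ :=
  if resolved then if agrees then 0 else 1 else p

theorem sum_siteCost_eq {ι β : Type*} (s : Finset ι) (p : ℝ) (r r' : ι → Prop)
    (ρ ρ' : ι → β) (hr' : ∀ i ∈ s, r' i) :
    ((s.filter fun i => r i ∧ r' i ∧ ρ i ≠ ρ' i).card : ℝ) +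
        p * ((s.filter fun i => r i ∧ ¬ r' i).card + (s.filter fun i => r' i ∧ ¬ r i).card) =
      ∑ i ∈ s, siteCost p (r i) (ρ i = ρ' i) := by
  simp only [natCast_card_filter, mul_sum, ← sum_add_distrib]
  refine sum_congr rfl fun i hi => ?_
  by_cases hr : r i <;> by_cases he : ρ i = ρ' i <;> simp [siteCost, hr, he, hr' i hi]

theorem famPdist_eq_sum_siteCost (p : ℝ) {F G : Finset (Finset (Fin n))}
    (hG : ∀ X ∈ triplets n, famResolved G X) :
    famPdist p F G =
      ∑ X ∈ triplets n, siteCost p (famResolved F X) (famRestrict F X = famRestrict G X) := by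
  rw [famPdist, famSetD, famSetR1, famSetR2]
  convert sum_siteCost_eq _ p _ _ (famRestrict F) (famRestrict G) hG

theorem famPdistU_eq_sum_siteCost (p : ℝ) {F G : Finset (Finset (Fin n))}
    (hG : ∀ X ∈ quartets n, famResolvedU G X) :
    famPdistU p F G =
      ∑ X ∈ quartets n,
        siteCost p (famResolvedU F X) (famRestrictU F X = famRestrictU G X) := by
  rw [famPdistU, famSetDU, famSetR1U, famSetR2U]
  convert sum_siteCost_eq _ p _ _ (famRestrictU F) (famRestrictU G) hG

theorem sum_siteCost_le {κ : Type*} [Fintype κ] {p : ℝ} (hp : 2 / 3 ≤ p)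
    {resolved agrees : κ → Prop} [DecidablePred agrees] (hres : ∀ k, resolved k)
    (hagrees : Fintype.card κ ≤ 3 * (univ.filter agrees).card) :
    ∑ k, siteCost p (resolved k) (agrees k) ≤ Fintype.card κ * p := by
  have hsum : ∑ k, siteCost p (resolved k) (agrees k) =
      Fintype.card κ - (univ.filter agrees).card := by
    rw [natCast_card_filter, ← card_univ, ← nsmul_one, ← sum_const, ← sum_sub_distrib]
    refine sum_congr rfl fun k _ => ?_
    by_cases h : agrees k <;> simp [siteCost, hres k, h]
  have hcard : (Fintype.card κ : ℝ) ≤ 3 * (univ.filter agrees).card := by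
    exact_mod_cast hagrees
  rw [hsum]
  nlinarith [(Fintype.card κ).cast_nonneg (α := ℝ)]

theorem exists_sum_le_of_forall_sum_le {κ ι β : Type*} [Fintype κ] [Nonempty κ] [Fintype ι]
    (s : Finset β) (c : κ → ι → β → ℝ) (c₀ : ι → β → ℝ)
    (h : ∀ i, ∀ x ∈ s, ∑ k, c k i x ≤ Fintype.card κ * c₀ i x) :
    ∃ k, ∑ i, ∑ x ∈ s, c k i x ≤ ∑ i, ∑ x ∈ s, c₀ i x := by
  have hsum : ∑ k, ∑ i, ∑ x ∈ s, c k i x ≤ ∑ _k : κ, ∑ i, ∑ x ∈ s, c₀ i x := by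
    simp only [sum_const, card_univ, nsmul_eq_mul, mul_sum]
    rw [sum_comm]
    exact sum_le_sum fun i _ => by rw [sum_comm]; exact sum_le_sum (h i)
  obtain ⟨k, -, hk⟩ := exists_le_of_sum_le univ_nonempty hsum
  exact ⟨k, hk⟩

theorem exists_forall_le_of_forall_exists_le {α β : Type*} [Finite α] [Nonempty α]
    [LinearOrder β] {P : α → Prop} (c : α → β) (h : ∀ a, ∃ b, P b ∧ c b ≤ c a) :
    ∃ a, P a ∧ ∀ b, c a ≤ c b := by
  obtain ⟨a, ha⟩ := Finite.exists_min c
  obtain ⟨b, hb, hba⟩ := h a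
  exact ⟨b, hb, fun b' => hba.trans (ha b')⟩

end Cost

end Phylogeny

open Phylogeny Phylogeny.Hierarchy

noncomputable def tripletTopology {n : ℕ} (X P : Finset (Fin n)) : Finset (Finset (Fin n)) :=
  insert X (insert P (X.image fun x => {x}))

namespace RTree

variable {n : ℕ} {X B : Finset (Fin n)}

def toHierarchy (T : RTree n) : Hierarchy n :=
  ⟨T.clusters, univ, T.univ_mem, fun A _ => subset_univ A, fun x _ => T.singleton_mem x,
    T.empty_not_mem, T.laminar⟩

noncomputable def refine (T : RTree n) (σ : Equiv.Perm (Fin n)) : RTree n :=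
  (T.toHierarchy.refine σ).toRTree rfl

theorem clusters_subset_refine (T : RTree n) (σ : Equiv.Perm (Fin n)) :
    T.clusters ⊆ (T.refine σ).clusters :=
  clusters_subset_refineClusters (L := T.toHierarchy)

theorem fullyResolved_refine (T : RTree n) (σ : Equiv.Perm (Fin n)) :
    (T.refine σ).FullyResolved := fun X hX =>
  famResolved_refine σ (subset_univ X) (by rw [(mem_powersetCard.1 hX).2]; omega)

theorem inter_eq_of_card_eq_two (T : RTree n) {C : Finset (Fin n)} (hX : X.card = 3)
    (hC : C ∈ T.clusters) (hB : B ∈ T.clusters) (hC2 : (C ∩ X).card = 2)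
    (hB2 : (B ∩ X).card = 2) : C ∩ X = B ∩ X := by
  rcases T.laminar C hC B hB with h | h | h
  · exact eq_of_subset_of_card_le (inter_subset_inter_right h) (by omega)
  · exact (eq_of_subset_of_card_le (inter_subset_inter_right h) (by omega)).symm
  · have hdisj : Disjoint (C ∩ X) (B ∩ X) :=
      disjoint_iff_inter_eq_empty.2 (subset_empty.1 (h ▸ inter_subset_inter
        inter_subset_left inter_subset_left))
    have := card_le_card (union_subset (inter_subset_right : C ∩ X ⊆ X)
      (inter_subset_right : B ∩ X ⊆ X))
    rw [card_union_of_disjoint hdisj] at this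
    omega

theorem restrict_eq_tripletTopology (T : RTree n) (hX : X.card = 3) (hB : B ∈ T.clusters)
    (hB2 : (B ∩ X).card = 2) : famRestrict T.clusters X = tripletTopology X (B ∩ X) := by
  ext A
  simp only [famRestrict, tripletTopology, mem_filter, mem_image, mem_insert]
  constructor
  · rintro ⟨⟨C, hC, rfl⟩, hne⟩
    have hle : (C ∩ X).card ≤ 3 := hX ▸ card_le_card inter_subset_right
    have hpos : 0 < (C ∩ X).card := card_pos.2 (nonempty_iff_ne_empty.2 hne)
    interval_cases h : (C ∩ X).card
    · obtain ⟨x, hx⟩ := card_eq_one.1 h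
      exact Or.inr (Or.inr ⟨x, inter_subset_right (hx ▸ mem_singleton_self x), hx.symm⟩)
    · exact Or.inr (Or.inl (T.inter_eq_of_card_eq_two hX hC hB h hB2))
    · exact Or.inl (eq_of_subset_of_card_le inter_subset_right (by omega))
  · rintro (rfl | rfl | ⟨x, hx, rfl⟩)
    · exact ⟨⟨univ, T.univ_mem, univ_inter A⟩, fun h => by simp [h] at hX⟩
    · exact ⟨⟨B, hB, rfl⟩, fun h => by simp [h] at hB2⟩
    · exact ⟨⟨{x}, T.singleton_mem x, singleton_inter_of_mem hx⟩, singleton_ne_empty x⟩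

theorem restrict_refine (T : RTree n) (σ : Equiv.Perm (Fin n)) (hX : X.card = 3)
    (hres : famResolved T.clusters X) :
    famRestrict (T.refine σ).clusters X = famRestrict T.clusters X := by
  obtain ⟨B, hB, hB2⟩ := hres
  rw [restrict_eq_tripletTopology _ hX hB hB2,
    restrict_eq_tripletTopology _ hX (T.clusters_subset_refine σ hB) hB2]

theorem sum_siteCost_refine_le (T G : RTree n) (hG : G.FullyResolved) {p : ℝ} (hp : 2 / 3 ≤ p)
    (hX : X ∈ triplets n) :
    ∑ σ, siteCost p (famResolved (T.refine σ).clusters X)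
        (famRestrict (T.refine σ).clusters X = famRestrict G.clusters X) ≤
      Fintype.card (Equiv.Perm (Fin n)) *
        siteCost p (famResolved T.clusters X)
          (famRestrict T.clusters X = famRestrict G.clusters X) := by
  have h3 : X.card = 3 := (mem_powersetCard.1 hX).2
  by_cases hres : famResolved T.clusters X
  · refine le_of_eq ?_
    rw [← card_univ, ← nsmul_eq_mul, ← sum_const]
    refine sum_congr rfl fun σ _ => ?_
    have hres' : famResolved (T.refine σ).clusters X := T.fullyResolved_refine σ X hX
    rw [T.restrict_refine σ h3 hres, siteCost, siteCost, if_pos hres', if_pos hres]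
  rw [siteCost, if_neg hres]
  obtain ⟨B, hB, hB2⟩ := hG X hX
  refine sum_siteCost_le hp (fun σ => T.fullyResolved_refine σ X hX) ?_
  refine (card_perm_le_of_card_eq_three (L := T.toHierarchy) (subset_univ X) h3 hres
    inter_subset_right hB2).trans (Nat.mul_le_mul_left 3 (card_le_card
      (monotone_filter_right _ ?_)))
  rintro σ - ⟨A, hA, hAX⟩
  rw [restrict_eq_tripletTopology (T.refine σ) h3 hA (hAX ▸ hB2), hAX,
    G.restrict_eq_tripletTopology h3 hB hB2]

theorem exists_fullyResolved_median {p : ℝ} (hp : 2 / 3 ≤ p) {k : ℕ} (hn : 1 ≤ n)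
    (P : Fin k → RTree n) (hP : ∀ i, (P i).FullyResolved) :
    ∃ T : RTree n, T.FullyResolved ∧
      ∀ T' : RTree n, ∑ i, pdist p T (P i) ≤ ∑ i, pdist p T' (P i) := by
  have : Nonempty (RTree n) := ⟨(Hierarchy.star univ ⟨⟨0, hn⟩, mem_univ _⟩).toRTree rfl⟩
  refine exists_forall_le_of_forall_exists_le _ fun T => ?_
  obtain ⟨σ, hσ⟩ := exists_sum_le_of_forall_sum_le (triplets n) _ _ fun i X hX =>
    T.sum_siteCost_refine_le (P i) (hP i) hp hX
  refine ⟨T.refine σ, T.fullyResolved_refine σ, ?_⟩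
  simpa only [pdist, famPdist_eq_sum_siteCost p (hP _)] using hσ

end RTree

noncomputable def quartetTopology {n : ℕ} (X P : Finset (Fin n)) : Finset (Finset (Fin n)) :=
  (X.image fun x => {x}) ∪ (X.image fun x => X.erase x) ∪ {P, X \ P}

theorem quartetTopology_sdiff {n : ℕ} {X P : Finset (Fin n)} (hPX : P ⊆ X) :
    quartetTopology X (X \ P) = quartetTopology X P := by
  rw [quartetTopology, quartetTopology, Finset.sdiff_sdiff_eq_self hPX, pair_comm]

namespace UTree

variable {n : ℕ} {X A B : Finset (Fin n)} {t : Fin n}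

theorem singleton_mem (T : UTree n) (hn : 2 ≤ n) (x : Fin n) : {x} ∈ T.splits :=
  (T.trivial_mem x).resolve_left fun h => by
    have := congrArg card h
    rw [card_singleton, card_univ, Fintype.card_fin] at this
    omega

theorem inter_eq_or_eq_sdiff (T : UTree n) {C : Finset (Fin n)} (hX : X.card = 4)
    (hC : C ∈ T.splits) (hB : B ∈ T.splits) (hC2 : (C ∩ X).card = 2)
    (hB2 : (B ∩ X).card = 2) : C ∩ X = B ∩ X ∨ C ∩ X = X \ (B ∩ X) := by
  have hBX : (X \ (B ∩ X)).card = 2 := by rw [card_sdiff_of_subset inter_subset_right]; omega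
  rcases T.compat C hC B hB with h | h | h | h
  · exact Or.inl (eq_of_subset_of_card_le (inter_subset_inter_right h) (by omega))
  · exact Or.inl (eq_of_subset_of_card_le (inter_subset_inter_right h) (by omega)).symm
  · refine Or.inr
      (eq_of_subset_of_card_le (subset_sdiff.2 ⟨inter_subset_right, ?_⟩) (by omega))
    exact disjoint_iff_inter_eq_empty.2 (subset_empty.1 (h ▸ inter_subset_inter
      inter_subset_left inter_subset_left))
  · refine Or.inr (eq_of_subset_of_card_le (fun z hz => ?_) (by omega)).symm
    obtain ⟨hzX, hzB⟩ := mem_sdiff.1 hz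
    have hzCB : z ∈ C ∪ B := h ▸ mem_univ z
    exact mem_inter.2
      ⟨(mem_union.1 hzCB).resolve_right fun hzB' => hzB (mem_inter.2 ⟨hzB', hzX⟩), hzX⟩

theorem famRestrictU_subset_quartetTopology (T : UTree n) (hX : X.card = 4)
    (hB : B ∈ T.splits) (hB2 : (B ∩ X).card = 2) :
    famRestrictU T.splits X ⊆ quartetTopology X (B ∩ X) := by
  intro A hA
  simp only [famRestrictU, mem_filter, mem_image] at hA
  obtain ⟨⟨C, hC, rfl⟩, hne, hneX⟩ := hA
  simp only [quartetTopology, mem_union, mem_image, mem_insert, mem_singleton]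
  have hlt : (C ∩ X).card < 4 :=
    hX ▸ card_lt_card (ssubset_of_subset_of_ne inter_subset_right hneX)
  have hpos : 0 < (C ∩ X).card := card_pos.2 (nonempty_iff_ne_empty.2 hne)
  interval_cases h : (C ∩ X).card
  · obtain ⟨x, hx⟩ := card_eq_one.1 h
    exact Or.inl (Or.inl ⟨x, inter_subset_right (hx ▸ mem_singleton_self x), hx.symm⟩)
  · exact Or.inr (T.inter_eq_or_eq_sdiff hX hC hB h hB2)
  · obtain ⟨x, hxC, hX'⟩ := exists_eq_insert_iff (s := C ∩ X) (t := X) |>.2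
      ⟨inter_subset_right, by omega⟩
    refine Or.inl (Or.inr ⟨x, hX' ▸ mem_insert_self x _, ?_⟩)
    conv_lhs => rw [← hX']
    exact erase_insert hxC

theorem quartetTopology_subset_famRestrictU (T : UTree n) (hX : X.card = 4)
    (hB : B ∈ T.splits) (hB2 : (B ∩ X).card = 2) :
    quartetTopology X (B ∩ X) ⊆ famRestrictU T.splits X := by
  have hn : 2 ≤ n := by
    have := card_le_univ X
    rw [Fintype.card_fin] at this
    omega
  have hBX : (X \ (B ∩ X)).card = 2 := by rw [card_sdiff_of_subset inter_subset_right]; omega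
  intro A hA
  simp only [quartetTopology, mem_union, mem_image, mem_insert, mem_singleton] at hA
  simp only [famRestrictU, mem_filter, mem_image]
  rcases hA with (⟨x, hx, rfl⟩ | ⟨x, hx, rfl⟩) | rfl | rfl
  · refine ⟨⟨{x}, T.singleton_mem hn x, singleton_inter_of_mem hx⟩, singleton_ne_empty x,
      fun h => ?_⟩
    rw [← h, card_singleton] at hX
    omega
  · refine ⟨⟨univ \ {x}, T.compl_mem _ (T.singleton_mem hn x), ?_⟩, fun h => ?_,
      fun h => ?_⟩
    · ext z
      simp
    · have := congrArg card h
      rw [card_erase_of_mem hx, card_empty] at this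
      omega
    · exact notMem_erase x X (by rw [h]; exact hx)
  · exact ⟨⟨B, hB, rfl⟩, fun h => by simp [h] at hB2, fun h => by rw [h] at hB2; omega⟩
  · refine ⟨⟨univ \ B, T.compl_mem B hB, ?_⟩, fun h => by simp [h] at hBX,
      fun h => by rw [h] at hBX; omega⟩
    ext z
    simp [and_comm]

theorem restrict_eq_quartetTopology (T : UTree n) (hX : X.card = 4) (hB : B ∈ T.splits)
    (hB2 : (B ∩ X).card = 2) : famRestrictU T.splits X = quartetTopology X (B ∩ X) :=
  (T.famRestrictU_subset_quartetTopology hX hB hB2).antisymm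
    (T.quartetTopology_subset_famRestrictU hX hB hB2)

/-- `T` rooted at the leaf `t`. -/
def toHierarchy (T : UTree n) (t : Fin n) (hn : 2 ≤ n) : Hierarchy n where
  clusters := T.splits.filter (t ∉ ·)
  support := univ \ {t}
  support_mem := mem_filter.2 ⟨T.compl_mem _ (T.singleton_mem hn t), by simp⟩
  subset_support A hA x hx := mem_sdiff.2 ⟨mem_univ x, fun h => (mem_filter.1 hA).2
    (mem_singleton.1 h ▸ hx)⟩
  singleton_mem x hx := mem_filter.2 ⟨T.singleton_mem hn x, by simpa [eq_comm] using hx⟩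
  empty_not_mem h := T.empty_not_mem (mem_filter.1 h).1
  laminar C hC D hD := by
    obtain ⟨hC, htC⟩ := mem_filter.1 hC
    obtain ⟨hD, htD⟩ := mem_filter.1 hD
    refine (T.compat C hC D hD).imp_right (Or.imp_right (Or.resolve_right · fun h => ?_))
    exact (mem_union.1 (h ▸ mem_univ t)).elim htC htD

noncomputable def refine (T : UTree n) (t : Fin n) (hn : 2 ≤ n) (σ : Equiv.Perm (Fin n)) :
    UTree n :=
  ((T.toHierarchy t hn).refine σ).toUTree t rfl

theorem splits_subset_refine (T : UTree n) (hn : 2 ≤ n) (σ : Equiv.Perm (Fin n)) :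
    T.splits ⊆ (T.refine t hn σ).splits := by
  intro A hA
  by_cases ht : t ∈ A
  · have hA' : univ \ A ∈ (T.toHierarchy t hn).clusters :=
      mem_filter.2 ⟨T.compl_mem A hA, by simp [ht]⟩
    refine mem_union.2 (Or.inr (mem_image.2 ⟨_, clusters_subset_refineClusters hA', ?_⟩))
    rw [Finset.sdiff_sdiff_eq_self (subset_univ _)]
  · exact mem_union.2 (Or.inl (clusters_subset_refineClusters (mem_filter.2 ⟨hA, ht⟩)))

theorem notMem_of_mem_refineClusters (T : UTree n) (hn : 2 ≤ n) {σ : Equiv.Perm (Fin n)}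
    (hA : A ∈ refineClusters (T.toHierarchy t hn).clusters σ) : t ∉ A := fun ht =>
  (mem_sdiff.1 (((T.toHierarchy t hn).refine σ).subset_support A hA ht)).2 (mem_singleton_self t)

theorem inter_erase_eq (htA : t ∉ A) : A ∩ X.erase t = A ∩ X := by
  rw [inter_erase, erase_eq_of_notMem fun h => htA (mem_inter.1 h).1]

theorem erase_subset_support (T : UTree n) (hn : 2 ≤ n) :
    X.erase t ⊆ (T.toHierarchy t hn).support := fun x hx =>
  mem_sdiff.2 ⟨mem_univ x, mem_singleton.not.2 (ne_of_mem_erase hx)⟩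

theorem not_famResolved_erase (T : UTree n) (hn : 2 ≤ n) (hunres : ¬ famResolvedU T.splits X) :
    ¬ famResolved (T.toHierarchy t hn).clusters (X.erase t) := by
  rintro ⟨C, hC, hC2⟩
  obtain ⟨hC, htC⟩ := mem_filter.1 hC
  exact hunres ⟨C, hC, by rwa [← inter_erase_eq htC]⟩

theorem fullyResolved_refine (T : UTree n) (hn : 2 ≤ n) (σ : Equiv.Perm (Fin n)) :
    (T.refine t hn σ).FullyResolved := by
  intro X hX
  have h4 := (mem_powersetCard.1 hX).2
  obtain ⟨A, hA, hA2⟩ := famResolved_refine σ (T.erase_subset_support hn)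
    (le_trans (by omega) (pred_card_le_card_erase : X.card - 1 ≤ (X.erase t).card))
  refine ⟨A, mem_union.2 (Or.inl hA), ?_⟩
  rwa [← inter_erase_eq (T.notMem_of_mem_refineClusters hn hA)]

theorem restrict_refine (T : UTree n) (hn : 2 ≤ n) (σ : Equiv.Perm (Fin n)) (hX : X.card = 4)
    (hres : famResolvedU T.splits X) :
    famRestrictU (T.refine t hn σ).splits X = famRestrictU T.splits X := by
  obtain ⟨B, hB, hB2⟩ := hres
  rw [restrict_eq_quartetTopology _ hX hB hB2,
    restrict_eq_quartetTopology _ hX (T.splits_subset_refine hn σ hB) hB2]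

/-- Rooted at `t`, an unresolved quartet becomes an unresolved triple `X.erase t` (if `t ∈ X`)
or quadruple. -/
theorem card_perm_le_of_not_famResolvedU (T : UTree n) (hn : 2 ≤ n) (hX : X.card = 4)
    (hunres : ¬ famResolvedU T.splits X) {Q : Finset (Fin n)} (hQX : Q ⊆ X) (hQ : Q.card = 2) :
    Fintype.card (Equiv.Perm (Fin n)) ≤ 3 * (univ.filter fun σ =>
      ∃ A ∈ refineClusters (T.toHierarchy t hn).clusters σ,
        A ∩ X = Q ∨ A ∩ X = X \ Q).card := by
  have hunres' := T.not_famResolved_erase (t := t) hn hunres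
  by_cases ht : t ∈ X
  · wlog htQ : t ∉ Q generalizing Q
    · have hQ' : (X \ Q).card = 2 := by rw [card_sdiff_of_subset hQX]; omega
      simpa only [Finset.sdiff_sdiff_eq_self hQX, or_comm] using
        this sdiff_subset hQ' fun h => (mem_sdiff.1 h).2 (not_not.1 htQ)
    have hQt : Q ⊆ X.erase t := fun x hx => mem_erase.2 ⟨fun h => htQ (h ▸ hx), hQX hx⟩
    refine (card_perm_le_of_card_eq_three (T.erase_subset_support hn)
      (by rw [card_erase_of_mem ht, hX]) hunres' hQt hQ).trans
        (Nat.mul_le_mul_left 3 (card_le_card (monotone_filter_right _ ?_)))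
    rintro σ - ⟨A, hA, hAQ⟩
    exact ⟨A, hA, Or.inl (inter_erase_eq (T.notMem_of_mem_refineClusters hn hA) ▸ hAQ)⟩
  · rw [erase_eq_of_notMem ht] at hunres'
    exact card_perm_le_of_card_eq_four (fun x hx => T.erase_subset_support hn
      (by rwa [erase_eq_of_notMem ht])) hX hunres' hQX hQ

theorem sum_siteCost_refine_le (T G : UTree n) (hn : 2 ≤ n) (hG : G.FullyResolved) {p : ℝ}
    (hp : 2 / 3 ≤ p) (hX : X ∈ quartets n) :
    ∑ σ, siteCost p (famResolvedU (T.refine t hn σ).splits X)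
        (famRestrictU (T.refine t hn σ).splits X = famRestrictU G.splits X) ≤
      Fintype.card (Equiv.Perm (Fin n)) * siteCost p (famResolvedU T.splits X)
        (famRestrictU T.splits X = famRestrictU G.splits X) := by
  have h4 : X.card = 4 := (mem_powersetCard.1 hX).2
  by_cases hres : famResolvedU T.splits X
  · refine le_of_eq ?_
    rw [← card_univ, ← nsmul_eq_mul, ← sum_const]
    refine sum_congr rfl fun σ _ => ?_
    have hres' : famResolvedU (T.refine t hn σ).splits X := T.fullyResolved_refine hn σ X hX
    rw [T.restrict_refine hn σ h4 hres, siteCost, siteCost, if_pos hres', if_pos hres]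
  rw [siteCost, if_neg hres]
  obtain ⟨B, hB, hB2⟩ := hG X hX
  refine sum_siteCost_le hp (fun σ => T.fullyResolved_refine hn σ X hX) ?_
  refine (T.card_perm_le_of_not_famResolvedU (t := t) hn h4 hres inter_subset_right hB2).trans
    (Nat.mul_le_mul_left 3 (card_le_card (monotone_filter_right _ ?_)))
  rintro σ - ⟨A, hA, hAX⟩
  have hA2 : (A ∩ X).card = 2 := by
    rcases hAX with h | h <;> rw [h]
    · exact hB2
    · rw [card_sdiff_of_subset inter_subset_right]; omega
  rw [restrict_eq_quartetTopology (T.refine t hn σ) h4 (mem_union.2 (Or.inl hA)) hA2,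
    G.restrict_eq_quartetTopology h4 hB hB2]
  rcases hAX with h | h
  · rw [h]
  · rw [h, quartetTopology_sdiff inter_subset_right]

instance (n : ℕ) : Nonempty (UTree n) := by
  rcases lt_or_ge n 2 with hn | hn
  · refine ⟨⟨∅, notMem_empty _, fun x => Or.inl (eq_univ_of_forall fun y => ?_), by simp,
      by simp⟩⟩
    exact mem_singleton.2 (Fin.ext (by omega))
  · let t : Fin n := ⟨0, by omega⟩
    exact ⟨(Hierarchy.star (univ \ {t}) ⟨⟨1, by omega⟩, by simp [t, Fin.ext_iff]⟩).toUTree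
      t rfl⟩

theorem exists_fullyResolved_median {p : ℝ} (hp : 2 / 3 ≤ p) {l : ℕ} (Q : Fin l → UTree n)
    (hQ : ∀ i, (Q i).FullyResolved) :
    ∃ T : UTree n, T.FullyResolved ∧
      ∀ T' : UTree n, ∑ i, pdist p T (Q i) ≤ ∑ i, pdist p T' (Q i) := by
  refine exists_forall_le_of_forall_exists_le _ fun T => ?_
  rcases lt_or_ge n 2 with hn | hn
  · refine ⟨T, fun X hX => ?_, le_rfl⟩
    have := card_le_univ X
    rw [(mem_powersetCard.1 hX).2, Fintype.card_fin] at this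
    omega
  let t : Fin n := ⟨0, by omega⟩
  obtain ⟨σ, hσ⟩ := exists_sum_le_of_forall_sum_le (quartets n) _ _ fun i X hX =>
    T.sum_siteCost_refine_le (t := t) (Q i) hn (hQ i) hp hX
  refine ⟨T.refine t hn σ, T.fullyResolved_refine hn σ, ?_⟩
  simpa only [pdist, famPdistU_eq_sum_siteCost p (hQ _)] using hσ

end UTree

theorem exists_fully_resolved_median_general (p : ℝ) (hp : 2 / 3 ≤ p)
    (n k : ℕ) (hn : 1 ≤ n) (P : Fin k → RTree n) (hP : ∀ i, (P i).FullyResolved)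
    (m l : ℕ) (Q : Fin l → UTree m) (hQ : ∀ i, (Q i).FullyResolved) :
    (∃ T : RTree n, T.FullyResolved ∧
        ∀ T' : RTree n,
          ∑ i, RTree.pdist p T (P i) ≤ ∑ i, RTree.pdist p T' (P i)) ∧
    ∃ T : UTree m, T.FullyResolved ∧
      ∀ T' : UTree m,
        ∑ i, UTree.pdist p T (Q i) ≤ ∑ i, UTree.pdist p T' (Q i) :=
  ⟨RTree.exists_fullyResolved_median hp hn P hP, UTree.exists_fullyResolved_median hp Q hQ⟩

/-- **Theorem.**  Let `P` (resp. `Q`) be a profile of fully resolved rooted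
(resp. unrooted) phylogenies over a fixed taxon set.  If `p ≥ 2/3`, then there
exists a median tree relative to `d⁽ᵖ⁾` — a tree minimizing the total parametric
distance to the profile — which is fully resolved. -/
theorem exists_fully_resolved_median (p : ℝ) (hp : 2 / 3 ≤ p) (hp1 : p ≤ 1)
    (n k : ℕ) (hn : 1 ≤ n) (P : Fin k → RTree n) (hP : ∀ i, (P i).FullyResolved)
    (m l : ℕ) (Q : Fin l → UTree m) (hQ : ∀ i, (Q i).FullyResolved) :
    (∃ T : RTree n, T.FullyResolved ∧
        ∀ T' : RTree n,
          ∑ i, RTree.pdist p T (P i) ≤ ∑ i, RTree.pdist p T' (P i)) ∧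
    ∃ T : UTree m, T.FullyResolved ∧
      ∀ T' : UTree m,
        ∑ i, UTree.pdist p T (Q i) ≤ ∑ i, UTree.pdist p T' (Q i) :=
  exists_fully_resolved_median_general p hp n k hn P hP m l Q hQ
end

section
/- In the rooted case, there exists an index q ∈ [d] such that f_q ≥ a_q/2; in the unrooted case, there exist two distinct indices q, r ∈ [d] such that f_{qr} ≥ a_{qr}/2. -/
open Finset

attribute [local instance] Classical.propDecidable

namespace RTree

variable {n : ℕ}

/-- The children of the node of `T` corresponding to the cluster `C`: the maximal
clusters of `T` properly contained in `C`. -/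
noncomputable def childSet (T : RTree n) (C : Finset (Fin n)) : Finset (Finset (Fin n)) :=
  T.clusters.filter fun A => A ⊂ C ∧ ¬ ∃ B ∈ T.clusters, A ⊂ B ∧ B ⊂ C

/-- The cluster family of `Pull-Out(T, u)`, where `u` is the child of the node `v`
corresponding to the cluster `A ⊂ C`:  the node `v` is split in two, creating the
new cluster `C \ A` gathering the remaining children of `v`. -/
noncomputable def pullOutFam (T : RTree n) (C A : Finset (Fin n)) : Finset (Finset (Fin n)) :=
  insert (C \ A) T.clusters

end RTree

/-- The triplets that are not resolved in the tree with cluster family `F` but are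
resolved in the tree with cluster family `F'` (the set `L_q` for `F' = Pull-Out`). -/
noncomputable def famL {n : ℕ} (F F' : Finset (Finset (Fin n))) : Finset (Finset (Fin n)) :=
  (triplets n).filter fun X => ¬ famResolved F X ∧ famResolved F' X

/-- The number `f_q` of votes cast by the profile `P` *for* the way the triplets of
`famL F F'` are resolved in `F'`. -/
noncomputable def famAgree {n k : ℕ} (P : Fin k → RTree n)
    (F F' : Finset (Finset (Fin n))) : ℕ :=
  ∑ X ∈ famL F F',
    (Finset.univ.filter fun i : Fin k =>
      famRestrict (P i).clusters X = famRestrict F' X).card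

/-- The number `a_q` of votes cast by the profile `P` *against* the way the triplets
of `famL F F'` are resolved in `F'`. -/
noncomputable def famDisagree {n k : ℕ} (P : Fin k → RTree n)
    (F F' : Finset (Finset (Fin n))) : ℕ :=
  ∑ X ∈ famL F F',
    (Finset.univ.filter fun i : Fin k =>
      famRestrict (P i).clusters X ≠ famRestrict F' X).card

namespace UTree

variable {n : ℕ}

/-- `part` is the partition of the taxa into the leaf sets of the subtrees hanging
off an internal node `v` of `T`: its blocks are split sides, they partition the taxon
set, there are at least three of them (`v` is internal), and every split of `T` has,
on one of its two sides, leaves from only one block (its edge lies in one of the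
subtrees around `v`). -/
def IsNodePartition (T : UTree n) (part : Finset (Finset (Fin n))) : Prop :=
  3 ≤ part.card ∧ (∀ B ∈ part, B ∈ T.splits) ∧
    (∀ B₁ ∈ part, ∀ B₂ ∈ part, B₁ ≠ B₂ → B₁ ∩ B₂ = ∅) ∧
    (∀ x : Fin n, ∃ B ∈ part, x ∈ B) ∧
    ∀ A ∈ T.splits, (∃ B ∈ part, A ⊆ B) ∨ (∃ B ∈ part, Finset.univ \ A ⊆ B)

/-- The split system of `Pull-2-Out(T, u₁, u₂)`, where `u₁`, `u₂` are the neighbors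
of the node `v` whose subtrees have leaf sets `B₁` and `B₂`:  the node `v` is split
in two, creating the new split `B₁ ∪ B₂` versus the rest. -/
noncomputable def pull2Fam (T : UTree n) (B₁ B₂ : Finset (Fin n)) :
    Finset (Finset (Fin n)) :=
  insert (B₁ ∪ B₂) (insert (Finset.univ \ (B₁ ∪ B₂)) T.splits)

end UTree

/-- The quartets that are not resolved in the tree with split system `F` but are
resolved in the tree with split system `F'` (the set `L_{qr}` for `F' = Pull-2-Out`). -/
noncomputable def famLU {n : ℕ} (F F' : Finset (Finset (Fin n))) : Finset (Finset (Fin n)) :=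
  (quartets n).filter fun X => ¬ famResolvedU F X ∧ famResolvedU F' X

/-- The number `f_{qr}` of votes cast by the profile `P` *for* the way the quartets
of `famLU F F'` are resolved in `F'`. -/
noncomputable def famAgreeU {n k : ℕ} (P : Fin k → UTree n)
    (F F' : Finset (Finset (Fin n))) : ℕ :=
  ∑ X ∈ famLU F F',
    (Finset.univ.filter fun i : Fin k =>
      famRestrictU (P i).splits X = famRestrictU F' X).card

/-- The number `a_{qr}` of votes cast by the profile `P` *against* the way the
quartets of `famLU F F'` are resolved in `F'`. -/
noncomputable def famDisagreeU {n k : ℕ} (P : Fin k → UTree n)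
    (F F' : Finset (Finset (Fin n))) : ℕ :=
  ∑ X ∈ famLU F F',
    (Finset.univ.filter fun i : Fin k =>
      famRestrictU (P i).splits X ≠ famRestrictU F' X).card

/-!
A triplet newly resolved by some `Pull-Out(T, u_q)` has its three leaves below three
distinct children of `v`, and it is resolved exactly by the pull-outs of these three
children, in three different ways.  A fully resolved input tree agrees with exactly one of
them, so summing over `q` the votes for are a third of all votes, `∑ 3 f_q = ∑ (f_q + a_q)`,
and `2 f_q ≥ a_q` for some `q`.  Likewise a quartet newly resolved by a `Pull-2-Out` has its
four leaves in four distinct subtrees around `v`; it is resolved by the `12` ordered pulls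
of two of these subtrees, and each resolution of the quartet agrees with `4` of them.
-/

theorem Finset.offDiag_image_of_injOn {α β : Type*} [DecidableEq β] {s : Finset α}
    {f : α → β} (hf : Set.InjOn f s) :
    (s.image f).offDiag = s.offDiag.image (Prod.map f f) := by
  ext ⟨x, y⟩
  simp only [mem_offDiag, mem_image, Prod.exists, Prod.map, Prod.mk.injEq]
  constructor
  · rintro ⟨⟨a, ha, rfl⟩, ⟨b, hb, rfl⟩, hne⟩
    exact ⟨a, b, ⟨ha, hb, fun hab => hne (hab ▸ rfl)⟩, rfl, rfl⟩
  · rintro ⟨a, b, ⟨ha, hb, hab⟩, rfl, rfl⟩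
    exact ⟨⟨a, ha, rfl⟩, ⟨b, hb, rfl⟩, fun h => hab (hf ha hb h)⟩

theorem Finset.card_filter_eq_erase {α : Type*} [DecidableEq α] {p X : Finset α}
    (hpX : p ⊆ X) (hp : p.card + 1 = X.card) : #{t ∈ X | p = X.erase t} = 1 := by
  have hfilter : {t ∈ X | p = X.erase t} = X \ p := by
    ext t
    simp only [mem_filter, mem_sdiff]
    refine ⟨fun ⟨htX, hpt⟩ => ⟨htX, hpt ▸ notMem_erase t X⟩, fun ⟨htX, htp⟩ => ⟨htX, ?_⟩⟩
    refine eq_of_subset_of_card_le (fun a ha => mem_erase.2 ⟨?_, hpX ha⟩) ?_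
    · rintro rfl; exact htp ha
    · rw [card_erase_of_mem htX]; omega
  rw [hfilter, card_sdiff_of_subset hpX]
  omega

theorem Finset.filter_offDiag_pair_eq {α : Type*} [DecidableEq α] {p X : Finset α}
    (hpX : p ⊆ X) (hp : p.card = 2) : {a ∈ X.offDiag | {a.1, a.2} = p} = p.offDiag := by
  ext ⟨a, b⟩
  simp only [mem_filter, mem_offDiag]
  constructor
  · rintro ⟨⟨-, -, hab⟩, rfl⟩
    simp [hab]
  · rintro ⟨ha, hb, hab⟩
    refine ⟨⟨hpX ha, hpX hb, hab⟩, eq_of_subset_of_card_le ?_ (by rw [hp, card_pair hab])⟩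
    exact insert_subset ha (singleton_subset_iff.2 hb)

theorem Finset.card_filter_offDiag_pair_eq_or_eq_sdiff {α : Type*} [DecidableEq α]
    {p X : Finset α} (hpX : p ⊆ X) (hp : p.card = 2) (hX : X.card = 4) :
    #{a ∈ X.offDiag | {a.1, a.2} = p ∨ {a.1, a.2} = X \ p} = 4 := by
  have hXp : (X \ p).card = 2 := by rw [card_sdiff_of_subset hpX]; omega
  have hdisj : Disjoint p.offDiag (X \ p).offDiag := disjoint_left.2 fun a ha ha' =>
    (mem_sdiff.1 (mem_offDiag.1 ha').1).2 (mem_offDiag.1 ha).1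
  rw [filter_or, filter_offDiag_pair_eq hpX hp, filter_offDiag_pair_eq sdiff_subset hXp,
    card_union_of_disjoint hdisj, offDiag_card, offDiag_card, hp, hXp]

theorem Finset.sdiff_inter_eq_sdiff_inter {α : Type*} [DecidableEq α] {C q X : Finset α}
    (hXC : X ⊆ C) : (C \ q) ∩ X = X \ (q ∩ X) := by
  ext t
  have := @hXC t
  simp only [mem_inter, mem_sdiff]
  tauto

theorem Finset.card_sdiff_inter_eq_two_iff {α : Type*} [DecidableEq α] {C q X : Finset α}
    (hX : X.card = 3) (hXC : X ⊆ C) : ((C \ q) ∩ X).card = 2 ↔ (q ∩ X).card = 1 := by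
  rw [sdiff_inter_eq_sdiff_inter hXC, card_sdiff_of_subset inter_subset_right, hX]
  have := card_le_card (inter_subset_right : q ∩ X ⊆ X)
  omega

section Blocks

variable {α : Type*} [DecidableEq α] {blocks : Finset (Finset α)} {X : Finset α}

theorem exists_blockOf (hdisj : (blocks : Set (Finset α)).Pairwise Disjoint)
    (hcover : ∀ t ∈ X, ∃ B ∈ blocks, t ∈ B) (hle : ∀ B ∈ blocks, (B ∩ X).card ≤ 1) :
    ∃ e : α → Finset α, Set.InjOn e X ∧ (∀ t ∈ X, e t ∩ X = {t}) ∧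
      {B ∈ blocks | (B ∩ X).card = 1} = X.image e := by
  choose! e he_mem he_self using hcover
  have he_meet : ∀ t ∈ X, e t ∩ X = {t} := fun t ht =>
    eq_singleton_iff_unique_mem.2 ⟨mem_inter.2 ⟨he_self t ht, ht⟩, fun u hu =>
      card_le_one.1 (hle _ (he_mem t ht)) u hu t (mem_inter.2 ⟨he_self t ht, ht⟩)⟩
  refine ⟨e, fun a ha b hb hab => ?_, he_meet, ?_⟩
  · simpa [he_meet a ha, he_meet b hb] using congrArg (· ∩ X) hab
  ext B
  simp only [mem_filter, mem_image]
  constructor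
  · rintro ⟨hB, hB1⟩
    obtain ⟨t, ht⟩ := card_eq_one.1 hB1
    have htBX : t ∈ B ∩ X := ht ▸ mem_singleton_self t
    refine ⟨t, (mem_inter.1 htBX).2, ?_⟩
    by_contra hne
    exact disjoint_left.1 (hdisj (he_mem t (mem_inter.1 htBX).2) hB hne)
      (he_self t (mem_inter.1 htBX).2) (mem_inter.1 htBX).1
  · rintro ⟨t, ht, rfl⟩
    exact ⟨he_mem t ht, by rw [he_meet t ht, card_singleton]⟩

theorem card_filter_blocks_inter_eq_one (hdisj : (blocks : Set (Finset α)).Pairwise Disjoint)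
    (hcover : ∀ t ∈ X, ∃ B ∈ blocks, t ∈ B) (hle : ∀ B ∈ blocks, (B ∩ X).card ≤ 1)
    (φ : Finset α → Prop) [DecidablePred φ] :
    #{B ∈ blocks | (B ∩ X).card = 1 ∧ φ (B ∩ X)} = #{t ∈ X | φ {t}} := by
  obtain ⟨e, he_inj, he_meet, he_image⟩ := exists_blockOf hdisj hcover hle
  calc #{B ∈ blocks | (B ∩ X).card = 1 ∧ φ (B ∩ X)}
      = #{B ∈ X.image e | φ (B ∩ X)} := by rw [← he_image, filter_filter]
    _ = #{t ∈ X | φ (e t ∩ X)} := by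
        rw [filter_image, card_image_of_injOn (he_inj.mono (filter_subset _ _))]
    _ = #{t ∈ X | φ {t}} := by
        rw [filter_congr fun t ht => by rw [he_meet t ht]]

theorem card_filter_offDiag_blocks_inter_eq_one
    (hdisj : (blocks : Set (Finset α)).Pairwise Disjoint)
    (hcover : ∀ t ∈ X, ∃ B ∈ blocks, t ∈ B) (hle : ∀ B ∈ blocks, (B ∩ X).card ≤ 1)
    (ψ : Finset α → Prop) [DecidablePred ψ] :
    #{b ∈ blocks.offDiag | (b.1 ∩ X).card = 1 ∧ (b.2 ∩ X).card = 1 ∧ ψ ((b.1 ∪ b.2) ∩ X)} =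
      #{a ∈ X.offDiag | ψ {a.1, a.2}} := by
  obtain ⟨e, he_inj, he_meet, he_image⟩ := exists_blockOf hdisj hcover hle
  have hinj : Set.InjOn (Prod.map e e) X.offDiag := (he_inj.prodMap he_inj).mono fun a ha => by
    simp only [coe_offDiag, Set.mem_offDiag] at ha
    exact ⟨ha.1, ha.2.1⟩
  calc #{b ∈ blocks.offDiag | (b.1 ∩ X).card = 1 ∧ (b.2 ∩ X).card = 1 ∧ ψ ((b.1 ∪ b.2) ∩ X)}
      = #{b ∈ (X.image e).offDiag | ψ ((b.1 ∪ b.2) ∩ X)} := by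
        rw [← he_image]
        congr 1
        ext b
        simp only [mem_filter, mem_offDiag]
        tauto
    _ = #{a ∈ X.offDiag | ψ ((e a.1 ∪ e a.2) ∩ X)} := by
        rw [Finset.offDiag_image_of_injOn he_inj, filter_image,
          card_image_of_injOn (hinj.mono (filter_subset _ _))]
        rfl
    _ = #{a ∈ X.offDiag | ψ {a.1, a.2}} := by
        refine congrArg card (filter_congr fun a ha => ?_)
        rw [mem_offDiag] at ha
        rw [union_inter_distrib_right, he_meet _ ha.1, he_meet _ ha.2.1, insert_eq]

end Blocks

section Voting

variable {ι β V : Type*} [DecidableEq β] [Fintype V]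

theorem sum_sum_card_filter_comm (s : Finset ι) (L : ι → Finset β) (r : ι → β → V → Prop)
    [∀ q X i, Decidable (r q X i)] :
    ∑ q ∈ s, ∑ X ∈ L q, #{i | r q X i} =
      ∑ X ∈ s.biUnion L, ∑ i, #{q ∈ s | X ∈ L q ∧ r q X i} := by
  rw [sum_comm' (β := ℕ) (t' := s.biUnion L) (s' := fun X => {q ∈ s | X ∈ L q})
    (fun q X => by simp only [mem_filter, mem_biUnion]; grind)]
  refine sum_congr rfl fun X _ => ?_
  simp only [card_filter, ← filter_filter]
  exact sum_comm

theorem exists_card_disagree_le_two_mul_card_agree (s : Finset ι) (hs : s.Nonempty)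
    (L : ι → Finset β) (agree : ι → β → V → Prop) [∀ q X i, Decidable (agree q X i)]
    (hbal : ∀ X i, 3 * #{q ∈ s | X ∈ L q ∧ agree q X i} = #{q ∈ s | X ∈ L q}) :
    ∃ q ∈ s, ∑ X ∈ L q, #{i | ¬ agree q X i} ≤ 2 * ∑ X ∈ L q, #{i | agree q X i} := by
  have htotal : 3 * ∑ q ∈ s, ∑ X ∈ L q, #{i | agree q X i} =
      ∑ q ∈ s, (∑ X ∈ L q, #{i | agree q X i} + ∑ X ∈ L q, #{i | ¬ agree q X i}) := by
    calc 3 * ∑ q ∈ s, ∑ X ∈ L q, #{i | agree q X i}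
        = ∑ X ∈ s.biUnion L, ∑ i : V, #{q ∈ s | X ∈ L q ∧ True} := by
          simp only [sum_sum_card_filter_comm, mul_sum, hbal, and_true]
      _ = ∑ q ∈ s, ∑ X ∈ L q, #{i : V | True} := (sum_sum_card_filter_comm ..).symm
      _ = _ := by
          simp only [← sum_add_distrib, card_filter_add_card_filter_not, filter_true]
  by_contra! hlt
  have := sum_lt_sum_of_nonempty hs hlt
  rw [← mul_sum, sum_add_distrib] at *
  omega

end Voting

section Restriction

variable {n : ℕ} {F G : Finset (Finset (Fin n))} {S X D : Finset (Fin n)}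

theorem mem_famRestrict_iff : D ∈ famRestrict F X ↔ (∃ S ∈ F, S ∩ X = D) ∧ D ≠ ∅ := by
  simp [famRestrict]

theorem mem_famRestrictU_iff :
    D ∈ famRestrictU F X ↔ (∃ S ∈ F, S ∩ X = D) ∧ D ≠ ∅ ∧ D ≠ X := by
  simp [famRestrictU]

theorem famResolved_insert : famResolved (insert S F) X ↔ (S ∩ X).card = 2 ∨ famResolved F X := by
  simp [famResolved]

theorem famResolvedU_insert :
    famResolvedU (insert S F) X ↔ (S ∩ X).card = 2 ∨ famResolvedU F X := by
  simp [famResolvedU]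

theorem notMem_famRestrict_of_not_famResolved (h : ¬ famResolved F X) (hD : D.card = 2) :
    D ∉ famRestrict F X := fun hmem => by
  obtain ⟨⟨S, hS, rfl⟩, -⟩ := mem_famRestrict_iff.1 hmem
  exact h ⟨S, hS, hD⟩

theorem notMem_famRestrictU_of_not_famResolvedU (h : ¬ famResolvedU F X) (hD : D.card = 2) :
    D ∉ famRestrictU F X := fun hmem => by
  obtain ⟨⟨S, hS, rfl⟩, -⟩ := mem_famRestrictU_iff.1 hmem
  exact h ⟨S, hS, hD⟩

theorem mem_famRestrict_insert (hD : D ≠ ∅) :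
    D ∈ famRestrict (insert S F) X ↔ S ∩ X = D ∨ D ∈ famRestrict F X := by
  simp [mem_famRestrict_iff, hD]

theorem mem_famRestrictU_insert (hD : D ≠ ∅) (hDX : D ≠ X) :
    D ∈ famRestrictU (insert S F) X ↔ S ∩ X = D ∨ D ∈ famRestrictU F X := by
  simp [mem_famRestrictU_iff, hD, hDX]

theorem mem_famRestrict_of_card_ne_two (hX : X.card = 3) (huniv : univ ∈ F)
    (hsing : ∀ t, {t} ∈ F) (hD : D.card ≠ 2) :
    D ∈ famRestrict F X ↔ D ⊆ X ∧ D.Nonempty := by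
  rw [mem_famRestrict_iff, nonempty_iff_ne_empty]
  refine ⟨fun ⟨⟨S, _, hSD⟩, hne⟩ => ⟨hSD ▸ inter_subset_right, hne⟩, fun ⟨hDX, hne⟩ => ⟨?_, hne⟩⟩
  have hle := card_le_card hDX
  have hpos := card_pos.2 (nonempty_iff_ne_empty.2 hne)
  obtain h1 | h3 : D.card = 1 ∨ D.card = 3 := by omega
  · obtain ⟨t, rfl⟩ := card_eq_one.1 h1
    exact ⟨{t}, hsing t, inter_eq_left.2 hDX⟩
  · exact ⟨univ, huniv, by rw [univ_inter, eq_of_subset_of_card_le hDX (by omega)]⟩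

theorem mem_famRestrictU_of_card_ne_two (hX : X.card = 4) (hsing : ∀ t ∈ X, {t} ∈ F)
    (hcompl : ∀ t ∈ X, univ \ {t} ∈ F) (hD : D.card ≠ 2) :
    D ∈ famRestrictU F X ↔ D ⊆ X ∧ D.Nonempty ∧ D ≠ X := by
  rw [mem_famRestrictU_iff, nonempty_iff_ne_empty]
  refine ⟨fun ⟨⟨S, _, hSD⟩, hne⟩ => ⟨hSD ▸ inter_subset_right, hne⟩,
    fun ⟨hDX, hne, hneX⟩ => ⟨?_, hne, hneX⟩⟩
  have hlt := card_lt_card (Finset.ssubset_iff_subset_ne.2 ⟨hDX, hneX⟩)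
  have hpos := card_pos.2 (nonempty_iff_ne_empty.2 hne)
  obtain h1 | h3 : D.card = 1 ∨ D.card = 3 := by omega
  · obtain ⟨t, rfl⟩ := card_eq_one.1 h1
    exact ⟨{t}, hsing t (singleton_subset_iff.1 hDX), inter_eq_left.2 hDX⟩
  · obtain ⟨u, hu⟩ := card_eq_one.1 (by rw [card_sdiff_of_subset hDX]; omega : (X \ D).card = 1)
    have huX : u ∈ X := (mem_sdiff.1 (hu ▸ mem_singleton_self u)).1
    refine ⟨univ \ {u}, hcompl u huX, ?_⟩
    ext v
    have := @hDX v
    simp only [← hu, mem_inter, mem_sdiff, mem_univ, true_and]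
    tauto

theorem famRestrict_eq_iff (hX : X.card = 3) (hFuniv : univ ∈ F) (hFsing : ∀ t, {t} ∈ F)
    (hGuniv : univ ∈ G) (hGsing : ∀ t, {t} ∈ G) :
    famRestrict F X = famRestrict G X ↔
      ∀ D, D.card = 2 → (D ∈ famRestrict F X ↔ D ∈ famRestrict G X) := by
  refine ⟨fun h D _ => h ▸ Iff.rfl, fun h => ext fun D => ?_⟩
  by_cases hD : D.card = 2
  · exact h D hD
  · rw [mem_famRestrict_of_card_ne_two hX hFuniv hFsing hD,
      mem_famRestrict_of_card_ne_two hX hGuniv hGsing hD]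

theorem famRestrictU_eq_iff (hX : X.card = 4) (hFsing : ∀ t ∈ X, {t} ∈ F)
    (hFcompl : ∀ t ∈ X, univ \ {t} ∈ F) (hGsing : ∀ t ∈ X, {t} ∈ G)
    (hGcompl : ∀ t ∈ X, univ \ {t} ∈ G) :
    famRestrictU F X = famRestrictU G X ↔
      ∀ D, D.card = 2 → (D ∈ famRestrictU F X ↔ D ∈ famRestrictU G X) := by
  refine ⟨fun h D _ => h ▸ Iff.rfl, fun h => ext fun D => ?_⟩
  by_cases hD : D.card = 2
  · exact h D hD
  · rw [mem_famRestrictU_of_card_ne_two hX hFsing hFcompl hD,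
      mem_famRestrictU_of_card_ne_two hX hGsing hGcompl hD]

end Restriction

namespace RTree

variable {n : ℕ} {T : RTree n} {C X S p q : Finset (Fin n)}

theorem pairwise_disjoint_childSet : (T.childSet C : Set (Finset (Fin n))).Pairwise Disjoint := by
  intro A hA B hB hAB
  simp only [childSet, coe_filter] at hA hB
  obtain ⟨hA, hAC, hAmax⟩ := hA
  obtain ⟨hB, hBC, hBmax⟩ := hB
  rcases T.laminar A hA B hB with h | h | h
  · exact absurd ⟨B, hB, h.ssubset_of_ne hAB, hBC⟩ hAmax
  · exact absurd ⟨A, hA, h.ssubset_of_ne hAB.symm, hAC⟩ hBmax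
  · exact disjoint_iff_inter_eq_empty.2 h

theorem exists_mem_childSet {t : Fin n} (ht : t ∈ C) (htC : {t} ≠ C) :
    ∃ A ∈ T.childSet C, t ∈ A := by
  obtain ⟨M, hM⟩ := Finset.exists_maximal (s := {B ∈ T.clusters | t ∈ B ∧ B ⊂ C})
    ⟨{t}, mem_filter.2 ⟨T.singleton_mem t, mem_singleton_self t,
      (singleton_subset_iff.2 ht).ssubset_of_ne htC⟩⟩
  obtain ⟨hMT, htM, hMC⟩ := mem_filter.1 hM.prop
  refine ⟨M, mem_filter.2 ⟨hMT, hMC, fun ⟨B, hB, hMB, hBC⟩ => ?_⟩, htM⟩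
  exact hMB.not_subset (hM.2 (mem_filter.2 ⟨hB, hMB.subset htM, hBC⟩) hMB.subset)

theorem exists_resolving_pair (T : RTree n) (hX : X.card = 3) (h : famResolved T.clusters X) :
    ∃ p ⊆ X, p.card = 2 ∧ ∀ D, D.card = 2 → (D ∈ famRestrict T.clusters X ↔ D = p) := by
  obtain ⟨S₀, hS₀, h2⟩ := h
  refine ⟨S₀ ∩ X, inter_subset_right, h2, fun D hD => ⟨?_, ?_⟩⟩
  · rw [mem_famRestrict_iff]
    rintro ⟨⟨S, hS, rfl⟩, -⟩
    rcases T.laminar S hS S₀ hS₀ with h | h | h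
    · exact eq_of_subset_of_card_le (inter_subset_inter h Subset.rfl) (by omega)
    · exact (eq_of_subset_of_card_le (inter_subset_inter h Subset.rfl) (by omega)).symm
    · have hdisj : Disjoint (S ∩ X) (S₀ ∩ X) :=
        (disjoint_iff_inter_eq_empty.2 h).mono inter_subset_left inter_subset_left
      have := card_le_card (union_subset inter_subset_right inter_subset_right :
        S ∩ X ∪ S₀ ∩ X ⊆ X)
      rw [card_union_of_disjoint hdisj] at this
      omega
  · rintro rfl
    exact mem_famRestrict_iff.2 ⟨⟨S₀, hS₀, rfl⟩, by rintro h; simp [h] at h2⟩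

theorem famRestrict_eq_famRestrict_insert_iff (Ti T : RTree n) (hX : X.card = 3)
    (hunres : ¬ famResolved T.clusters X) (hp2 : p.card = 2)
    (hp : ∀ D, D.card = 2 → (D ∈ famRestrict Ti.clusters X ↔ D = p)) :
    famRestrict Ti.clusters X = famRestrict (insert S T.clusters) X ↔ p = S ∩ X := by
  have hS : ∀ D : Finset (Fin n), D.card = 2 →
      (D ∈ famRestrict (insert S T.clusters) X ↔ D = S ∩ X) := fun D hD => by
    rw [mem_famRestrict_insert (by rintro rfl; simp at hD), eq_comm]
    simp [notMem_famRestrict_of_not_famResolved hunres hD]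
  rw [famRestrict_eq_iff hX Ti.univ_mem Ti.singleton_mem (mem_insert_of_mem T.univ_mem)
    (fun t => mem_insert_of_mem (T.singleton_mem t))]
  refine ⟨fun h => (hS p hp2).1 ((h p hp2).1 ((hp p hp2).2 rfl)), ?_⟩
  rintro rfl D hD
  rw [hp D hD, hS D hD]

theorem subset_of_card_sdiff_inter_eq_two (hC : C ∈ T.clusters) (hX : X.card = 3)
    (hunres : ¬ famResolved T.clusters X) (h2 : ((C \ q) ∩ X).card = 2) : X ⊆ C := by
  by_contra hXC
  obtain ⟨t, htX, htC⟩ := not_subset.1 hXC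
  have hle : (C ∩ X).card ≤ 2 := by
    have := card_le_card (fun a ha => mem_erase.2 ⟨fun h => htC (h ▸ (mem_inter.1 ha).1),
      (mem_inter.1 ha).2⟩ : C ∩ X ⊆ X.erase t)
    rwa [card_erase_of_mem htX, hX] at this
  have hge := card_le_card (inter_subset_inter sdiff_subset Subset.rfl : (C \ q) ∩ X ⊆ C ∩ X)
  exact hunres ⟨C, hC, by omega⟩

/-- A child holding two points of `X` would resolve `X` in `T`; one holding all three
would leave nothing for `Pull-Out(T, q)` to separate. -/
theorem card_inter_le_one_of_pullOut (hC : C ∈ T.clusters) (hX : X.card = 3)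
    (hunres : ¬ famResolved T.clusters X) (hq : q ∈ T.childSet C)
    (h2 : ((C \ q) ∩ X).card = 2) : ∀ B ∈ T.childSet C, (B ∩ X).card ≤ 1 := by
  have hXC := subset_of_card_sdiff_inter_eq_two hC hX hunres h2
  have hq1 := (Finset.card_sdiff_inter_eq_two_iff hX hXC).1 h2
  obtain ⟨x, hx⟩ := card_eq_one.1 hq1
  have hxq : x ∈ q ∩ X := hx ▸ mem_singleton_self x
  intro B hB
  have hB2 : (B ∩ X).card ≠ 2 := fun h => hunres ⟨B, (mem_filter.1 hB).1, h⟩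
  have hB3 : (B ∩ X).card ≠ 3 := fun h => by
    have hBX : B ∩ X = X := eq_of_subset_of_card_le inter_subset_right (by omega)
    have hxB : x ∈ B := inter_eq_right.1 hBX (mem_inter.1 hxq).2
    obtain rfl : B = q := by
      by_contra hne
      exact disjoint_left.1 (pairwise_disjoint_childSet hB hq hne) hxB (mem_inter.1 hxq).1
    omega
  have := card_le_card (inter_subset_right : B ∩ X ⊆ X)
  omega

theorem three_mul_card_filter_agree_pullOut (Ti : RTree n) (hTi : Ti.FullyResolved)
    (hC : C ∈ T.clusters) (X : Finset (Fin n)) :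
    3 * #{q ∈ T.childSet C | X ∈ famL T.clusters (T.pullOutFam C q) ∧
        famRestrict Ti.clusters X = famRestrict (T.pullOutFam C q) X} =
      #{q ∈ T.childSet C | X ∈ famL T.clusters (T.pullOutFam C q)} := by
  by_cases hL : ∃ q ∈ T.childSet C, X ∈ famL T.clusters (T.pullOutFam C q)
  swap
  · have hL' : ∀ q ∈ T.childSet C, ¬ X ∈ famL T.clusters (T.pullOutFam C q) :=
      fun q hq h => hL ⟨q, hq, h⟩
    rw [filter_false_of_mem hL', filter_false_of_mem fun q hq h => hL' q hq (And.left h)]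
    rfl
  obtain ⟨q₀, hq₀, hXL⟩ := hL
  obtain ⟨hXt, hunres, hres⟩ := mem_filter.1 hXL
  have hX : X.card = 3 := (mem_powersetCard.1 hXt).2
  have hmemL : ∀ q, X ∈ famL T.clusters (T.pullOutFam C q) ↔ ((C \ q) ∩ X).card = 2 := by
    simp [famL, hXt, hunres, pullOutFam, famResolved_insert]
  have h2 := (hmemL q₀).1 hXL
  have hXC := subset_of_card_sdiff_inter_eq_two hC hX hunres h2
  obtain ⟨p, hpX, hp2, hp⟩ := Ti.exists_resolving_pair hX (hTi X hXt)
  have hcover : ∀ t ∈ X, ∃ B ∈ T.childSet C, t ∈ B := fun t ht =>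
    exists_mem_childSet (hXC ht) fun h => by
      have := card_le_card (h ▸ hXC); simp [hX] at this
  have hblocks := card_filter_blocks_inter_eq_one pairwise_disjoint_childSet hcover
    (card_inter_le_one_of_pullOut hC hX hunres hq₀ h2)
  calc 3 * #{q ∈ T.childSet C | X ∈ famL T.clusters (T.pullOutFam C q) ∧
        famRestrict Ti.clusters X = famRestrict (T.pullOutFam C q) X}
      = 3 * #{q ∈ T.childSet C | (q ∩ X).card = 1 ∧ p = X \ (q ∩ X)} := by
        congr 2
        refine filter_congr fun q _ => ?_
        rw [hmemL, Finset.card_sdiff_inter_eq_two_iff hX hXC, pullOutFam,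
          famRestrict_eq_famRestrict_insert_iff Ti T hX hunres hp2 hp,
          Finset.sdiff_inter_eq_sdiff_inter hXC]
    _ = 3 * #{t ∈ X | p = X.erase t} := by
        rw [hblocks (fun D => p = X \ D)]
        simp only [sdiff_singleton_eq_erase]
    _ = #{t ∈ X | True} := by
        rw [card_filter_eq_erase hpX (by omega), filter_true, hX]
    _ = #{q ∈ T.childSet C | X ∈ famL T.clusters (T.pullOutFam C q)} := by
        rw [← hblocks (fun _ => True)]
        simp only [and_true, hmemL, Finset.card_sdiff_inter_eq_two_iff hX hXC]

end RTree

namespace UTree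

variable {n : ℕ} {T : UTree n} {part : Finset (Finset (Fin n))} {X p B₁ B₂ : Finset (Fin n)}

theorem singleton_mem_splits (T : UTree n) (hn : 1 < n) (t : Fin n) : {t} ∈ T.splits := by
  obtain ⟨u, hut⟩ := Fintype.exists_ne_of_one_lt_card (by simpa using hn) t
  exact (T.trivial_mem t).resolve_left fun h => hut (mem_singleton.1 (h ▸ mem_univ u))

theorem exists_resolving_pair (T : UTree n) (hX : X.card = 4) (h : famResolvedU T.splits X) :
    ∃ p ⊆ X, p.card = 2 ∧
      ∀ D, D.card = 2 → (D ∈ famRestrictU T.splits X ↔ D = p ∨ D = X \ p) := by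
  obtain ⟨S₀, hS₀, h2⟩ := h
  have hcompl : (X \ (S₀ ∩ X)).card = 2 := by
    rw [card_sdiff_of_subset inter_subset_right]; omega
  refine ⟨S₀ ∩ X, inter_subset_right, h2, fun D hD => ⟨?_, ?_⟩⟩
  · rw [mem_famRestrictU_iff]
    rintro ⟨⟨S, hS, rfl⟩, -⟩
    rcases T.compat S hS S₀ hS₀ with h | h | h | h
    · exact .inl (eq_of_subset_of_card_le (inter_subset_inter h Subset.rfl) (by omega))
    · exact .inl (eq_of_subset_of_card_le (inter_subset_inter h Subset.rfl) (by omega)).symm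
    · refine .inr (eq_of_subset_of_card_le (fun a ha => ?_) (by omega))
      obtain ⟨haS, haX⟩ := mem_inter.1 ha
      refine mem_sdiff.2 ⟨haX, fun ha' => ?_⟩
      simpa [h] using mem_inter.2 ⟨haS, (mem_inter.1 ha').1⟩
    · refine .inr (eq_of_subset_of_card_le (fun a ha => ?_) (by omega)).symm
      obtain ⟨haX, ha⟩ := mem_sdiff.1 ha
      have : a ∈ S ∪ S₀ := h ▸ mem_univ a
      exact mem_inter.2 ⟨(mem_union.1 this).resolve_right fun h => ha (mem_inter.2 ⟨h, haX⟩), haX⟩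
  · have hne : D ≠ ∅ := by rintro rfl; simp at hD
    have hneX : D ≠ X := by rintro rfl; omega
    rintro (rfl | rfl)
    · exact mem_famRestrictU_iff.2 ⟨⟨S₀, hS₀, rfl⟩, hne, hneX⟩
    · refine mem_famRestrictU_iff.2 ⟨⟨univ \ S₀, T.compl_mem S₀ hS₀, ?_⟩, hne, hneX⟩
      ext a
      simp only [mem_inter, mem_sdiff, mem_univ, true_and]
      tauto

theorem mem_famRestrictU_pull2Fam_iff (hunres : ¬ famResolvedU T.splits X) {D : Finset (Fin n)}
    (hD : D.card = 2) (hX : X.card = 4) :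
    D ∈ famRestrictU (T.pull2Fam B₁ B₂) X ↔ D = (B₁ ∪ B₂) ∩ X ∨ D = X \ ((B₁ ∪ B₂) ∩ X) := by
  have hne : D ≠ ∅ := by rintro rfl; simp at hD
  have hneX : D ≠ X := by rintro rfl; omega
  have hcompl : (univ \ (B₁ ∪ B₂)) ∩ X = X \ ((B₁ ∪ B₂) ∩ X) := by
    ext a
    simp only [mem_inter, mem_sdiff, mem_univ, true_and]
    tauto
  rw [pull2Fam, mem_famRestrictU_insert hne hneX, mem_famRestrictU_insert hne hneX, hcompl]
  simp [notMem_famRestrictU_of_not_famResolvedU hunres hD, eq_comm]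

theorem famRestrictU_eq_famRestrictU_pull2Fam_iff (Ti T : UTree n) (hX : X.card = 4)
    (hunres : ¬ famResolvedU T.splits X) (hpX : p ⊆ X) (hp2 : p.card = 2)
    (hp : ∀ D, D.card = 2 → (D ∈ famRestrictU Ti.splits X ↔ D = p ∨ D = X \ p)) :
    famRestrictU Ti.splits X = famRestrictU (T.pull2Fam B₁ B₂) X ↔
      (B₁ ∪ B₂) ∩ X = p ∨ (B₁ ∪ B₂) ∩ X = X \ p := by
  have hn : 1 < n := by
    have := card_le_univ X
    simp only [hX, Fintype.card_fin] at this
    omega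
  have hpull : ∀ A ∈ T.splits, A ∈ T.pull2Fam B₁ B₂ := fun A hA =>
    mem_insert_of_mem (mem_insert_of_mem hA)
  rw [famRestrictU_eq_iff hX (fun t _ => Ti.singleton_mem_splits hn t)
    (fun t _ => Ti.compl_mem _ (Ti.singleton_mem_splits hn t))
    (fun t _ => hpull _ (T.singleton_mem_splits hn t))
    (fun t _ => hpull _ (T.compl_mem _ (T.singleton_mem_splits hn t)))]
  have hEX : (B₁ ∪ B₂) ∩ X ⊆ X := inter_subset_right
  constructor
  · intro h
    rcases (mem_famRestrictU_pull2Fam_iff hunres hp2 hX).1 ((h p hp2).1 ((hp p hp2).2 (.inl rfl)))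
      with h | h
    · exact .inl h.symm
    · exact .inr (by rw [h, Finset.sdiff_sdiff_eq_self hEX])
  · rintro (h | h) D hD
    · rw [hp D hD, mem_famRestrictU_pull2Fam_iff hunres hD hX, h]
    · rw [hp D hD, mem_famRestrictU_pull2Fam_iff hunres hD hX, h,
        Finset.sdiff_sdiff_eq_self hpX, or_comm]

theorem IsNodePartition.pairwise_disjoint (hpart : T.IsNodePartition part) :
    (part : Set (Finset (Fin n))).Pairwise Disjoint :=
  fun B hB B' hB' hne => disjoint_iff_inter_eq_empty.2 (hpart.2.2.1 B hB B' hB' hne)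

theorem famResolvedU_pull2Fam_iff (hX : X.card = 4) (hunres : ¬ famResolvedU T.splits X) :
    famResolvedU (T.pull2Fam B₁ B₂) X ↔ ((B₁ ∪ B₂) ∩ X).card = 2 := by
  have hcompl : ((univ \ (B₁ ∪ B₂)) ∩ X).card + ((B₁ ∪ B₂) ∩ X).card = 4 := by
    rw [← hX, ← card_sdiff_add_card_inter X (B₁ ∪ B₂), inter_comm X]
    congr 2
    ext a
    simp only [mem_inter, mem_sdiff, mem_univ, true_and]
    tauto
  rw [pull2Fam, famResolvedU_insert, famResolvedU_insert, or_iff_left hunres]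
  omega

/-- A block holding two points of `X` would resolve `X` in `T`; one holding three would
leave room for only one point of `X` in `B₁ ∪ B₂`. -/
theorem card_inter_le_one_of_pull2Fam (hpart : T.IsNodePartition part) (hX : X.card = 4)
    (hunres : ¬ famResolvedU T.splits X) (hB₁ : B₁ ∈ part) (hB₂ : B₂ ∈ part) (hne : B₁ ≠ B₂)
    (h2 : ((B₁ ∪ B₂) ∩ X).card = 2) : ∀ B ∈ part, (B ∩ X).card ≤ 1 := by
  have hdisjX : ∀ B ∈ part, ∀ B' ∈ part, B ≠ B' → Disjoint (B ∩ X) (B' ∩ X) :=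
    fun B hB B' hB' hne => (hpart.pairwise_disjoint hB hB' hne).mono
      inter_subset_left inter_subset_left
  have hne2 : ∀ B ∈ part, (B ∩ X).card ≠ 2 := fun B hB h => hunres ⟨B, hpart.2.1 B hB, h⟩
  have hsum : (B₁ ∩ X).card + (B₂ ∩ X).card = 2 := by
    rw [← card_union_of_disjoint (hdisjX B₁ hB₁ B₂ hB₂ hne), ← union_inter_distrib_right, h2]
  have h1 : (B₁ ∩ X).card = 1 ∧ (B₂ ∩ X).card = 1 := by
    have := hne2 B₁ hB₁; have := hne2 B₂ hB₂; omega
  intro B hB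
  by_contra! hlt
  have hBB₁ : B ≠ B₁ := by rintro rfl; omega
  have hBB₂ : B ≠ B₂ := by rintro rfl; omega
  have hunion : (B ∩ X ∪ (B₁ ∪ B₂) ∩ X).card ≤ 4 :=
    hX ▸ card_le_card (union_subset inter_subset_right inter_subset_right)
  rw [card_union_of_disjoint, h2] at hunion
  · have := hne2 B hB; omega
  · rw [union_inter_distrib_right]
    exact disjoint_union_right.2 ⟨hdisjX B hB B₁ hB₁ hBB₁, hdisjX B hB B₂ hB₂ hBB₂⟩

theorem three_mul_card_filter_agree_pull2Fam (Ti : UTree n) (hTi : Ti.FullyResolved)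
    (hpart : T.IsNodePartition part) (X : Finset (Fin n)) :
    3 * #{b ∈ part.offDiag | X ∈ famLU T.splits (T.pull2Fam b.1 b.2) ∧
        famRestrictU Ti.splits X = famRestrictU (T.pull2Fam b.1 b.2) X} =
      #{b ∈ part.offDiag | X ∈ famLU T.splits (T.pull2Fam b.1 b.2)} := by
  by_cases hL : ∃ b ∈ part.offDiag, X ∈ famLU T.splits (T.pull2Fam b.1 b.2)
  swap
  · have hL' : ∀ b ∈ part.offDiag, ¬ X ∈ famLU T.splits (T.pull2Fam b.1 b.2) :=
      fun b hb h => hL ⟨b, hb, h⟩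
    rw [filter_false_of_mem hL', filter_false_of_mem fun b hb h => hL' b hb (And.left h)]
    rfl
  obtain ⟨⟨B₁, B₂⟩, hb, hXL⟩ := hL
  obtain ⟨hB₁, hB₂, hne⟩ := mem_offDiag.1 hb
  obtain ⟨hXq, hunres, hres⟩ := mem_filter.1 hXL
  have hX : X.card = 4 := (mem_powersetCard.1 hXq).2
  have hle := card_inter_le_one_of_pull2Fam hpart hX hunres hB₁ hB₂ hne
    ((famResolvedU_pull2Fam_iff hX hunres).1 hres)
  have hmemL : ∀ b ∈ part.offDiag, X ∈ famLU T.splits (T.pull2Fam b.1 b.2) ↔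
      (b.1 ∩ X).card = 1 ∧ (b.2 ∩ X).card = 1 := fun b hb => by
    obtain ⟨hb₁, hb₂, hne⟩ := mem_offDiag.1 hb
    have hdisj : Disjoint (b.1 ∩ X) (b.2 ∩ X) :=
      (hpart.pairwise_disjoint hb₁ hb₂ hne).mono inter_subset_left inter_subset_left
    have := hle _ hb₁
    have := hle _ hb₂
    simp only [famLU, mem_filter, hXq, hunres, not_false_eq_true, true_and,
      famResolvedU_pull2Fam_iff hX hunres, union_inter_distrib_right,
      card_union_of_disjoint hdisj]
    omega
  obtain ⟨p, hpX, hp2, hp⟩ := Ti.exists_resolving_pair hX (hTi X hXq)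
  have hblocks := card_filter_offDiag_blocks_inter_eq_one hpart.pairwise_disjoint
    (fun t _ => hpart.2.2.2.1 t) hle
  calc 3 * #{b ∈ part.offDiag | X ∈ famLU T.splits (T.pull2Fam b.1 b.2) ∧
        famRestrictU Ti.splits X = famRestrictU (T.pull2Fam b.1 b.2) X}
      = 3 * #{b ∈ part.offDiag | (b.1 ∩ X).card = 1 ∧ (b.2 ∩ X).card = 1 ∧
          ((b.1 ∪ b.2) ∩ X = p ∨ (b.1 ∪ b.2) ∩ X = X \ p)} := by
        congr 2
        refine filter_congr fun b hb => ?_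
        rw [hmemL b hb, famRestrictU_eq_famRestrictU_pull2Fam_iff Ti T hX hunres hpX hp2 hp,
          and_assoc]
    _ = 3 * #{a ∈ X.offDiag | {a.1, a.2} = p ∨ {a.1, a.2} = X \ p} := by
        rw [hblocks (fun E => E = p ∨ E = X \ p)]
    _ = #{a ∈ X.offDiag | True} := by
        rw [card_filter_offDiag_pair_eq_or_eq_sdiff hpX hp2 hX, filter_true, offDiag_card, hX]
    _ = #{b ∈ part.offDiag | X ∈ famLU T.splits (T.pull2Fam b.1 b.2)} := by
        rw [← hblocks (fun _ => True)]
        exact congrArg card (filter_congr fun b hb => by rw [hmemL b hb, and_true])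

end UTree

/-- **Lemma.**  Let `P` (resp. `Q`) be a profile of fully resolved rooted
(resp. unrooted) phylogenies.  Rooted case: for every tree `T` and every unresolved
node of `T` — a cluster `C` with at least `3` children — there is a child `A` of
`C` such that `f_q ≥ a_q / 2`, where `f_q` and `a_q` count the votes of the profile
for and against the resolutions of the triplets newly resolved by
`Pull-Out(T, A)`.  Unrooted case: for every tree `T` and every unresolved node of
`T` — a node partition with at least `4` blocks — there are two distinct blocks
(neighbors) `B₁ ≠ B₂` with `f_{qr} ≥ a_{qr} / 2` for `Pull-2-Out(T, B₁, B₂)`. -/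
theorem exists_supported_pullout (n k : ℕ) :
    (∀ P : Fin k → RTree n, (∀ i, (P i).FullyResolved) →
      ∀ T : RTree n, ∀ C ∈ T.clusters, 3 ≤ (T.childSet C).card →
        ∃ A ∈ T.childSet C,
          famDisagree P T.clusters (T.pullOutFam C A) ≤
            2 * famAgree P T.clusters (T.pullOutFam C A)) ∧
    ∀ Q : Fin k → UTree n, (∀ i, (Q i).FullyResolved) →
      ∀ T : UTree n, ∀ part : Finset (Finset (Fin n)),
        T.IsNodePartition part → 4 ≤ part.card →
          ∃ B₁ ∈ part, ∃ B₂ ∈ part, B₁ ≠ B₂ ∧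
            famDisagreeU Q T.splits (T.pull2Fam B₁ B₂) ≤
              2 * famAgreeU Q T.splits (T.pull2Fam B₁ B₂) := by
  refine ⟨fun P hP T C hC h3 => ?_, fun Q hQ T part hpart h4 => ?_⟩
  · exact exists_card_disagree_le_two_mul_card_agree _ (card_pos.1 (by omega)) _ _
      fun X i => RTree.three_mul_card_filter_agree_pullOut (P i) (hP i) hC X
  · have hne : part.offDiag.Nonempty := by
      rw [← card_pos, offDiag_card]
      exact Nat.sub_pos_of_lt (by nlinarith)
    obtain ⟨⟨B₁, B₂⟩, hb, hle⟩ := exists_card_disagree_le_two_mul_card_agree _ hne _ _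
      fun X i => UTree.three_mul_card_filter_agree_pull2Fam (Q i) (hQ i) hpart X
    obtain ⟨hB₁, hB₂, hne⟩ := mem_offDiag.1 hb
    exact ⟨B₁, hB₁, B₂, hB₂, hne, hle⟩
end
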